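/- arXiv:1309.7812 — 4 statements merged into one kernel-verified Lean document; each statement's English description precedes it below -/
import Mathlib

section
/- Let σ act on S = F[x_1,…,x_m,y_1,…,y_m] as described. Then the invariant ring S^σ is generated as an F-algebra by the set {n_1,…,n_m} ∪ {Δ(β) : β a monomial dividing y_1⋯y_m}. -/
/-!
Write `Δ = σ - 1` and let `A` be the algebra generated by the `n_j` and the `Δ(y_J)`. Since `σ`
fixes `x_j` and `n_j`, and `y_j² = n_j - x_j y_j`, induction on `f` shows `Δ(f y_J) ∈ A` for all
`f` and `J`; in particular `x_j = Δ(y_j) ∈ A` and `Δ(S) ⊆ A`.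

Conversely, for `T ⊆ {1, …, m}` let `C_T = F[x, n, y_T]`, the image of the substitution sending
`y_j ↦ n_j` for `j ∉ T`. By induction on `T`, every invariant in `C_T` lies in `A`; for `T = ∅`
this is clear and `C_univ = S`. Every element of `C_{T ∪ {t}}` is uniquely `a + b y_t` with
`a, b ∈ C_T`, and invariance means `σ b = b` and `Δ a = -x_t b`. Pulling back along the (injective)
substitution and setting `x_t = 0` splits `a = a₀ + x_t a'` with `a₀` invariant and `Δ a' = -b`;
then, in characteristic two, `a + b y_t = a₀ + Δ(a' (x_t - y_t))`.
-/

open MvPolynomial Finset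

namespace CharTwoShear

variable {R : Type*} [CommRing R] {m : ℕ}

local notation "𝒮" => MvPolynomial (Fin m ⊕ Fin m) R

/-- `σ` is `shear univ`. -/
noncomputable def shear (T : Finset (Fin m)) : 𝒮 →ₐ[R] 𝒮 :=
  aeval <| Sum.elim (fun j => X (.inl j))
    fun j => if j ∈ T then X (.inr j) + X (.inl j) else X (.inr j)

noncomputable def normY (j : Fin m) : 𝒮 := X (.inr j) ^ 2 + X (.inl j) * X (.inr j)

noncomputable def normSubstVars (T : Finset (Fin m)) : Fin m ⊕ Fin m → 𝒮 :=
  Sum.elim (fun j => X (.inl j)) fun j => if j ∈ T then X (.inr j) else normY j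

noncomputable def normSubst (T : Finset (Fin m)) : 𝒮 →ₐ[R] 𝒮 := aeval (normSubstVars T)

noncomputable def xToZero (t : Fin m) : 𝒮 →ₐ[R] 𝒮 := aeval <| Function.update X (.inl t) 0

noncomputable def yMon (J : Finset (Fin m)) : 𝒮 := ∏ j ∈ J, X (.inr j)

variable (R m) in
noncomputable def generators : Set 𝒮 :=
  Set.range normY ∪ Set.range fun J => shear univ (yMon J) - yMon J

@[simp] lemma shear_X_inl (T : Finset (Fin m)) (j : Fin m) :
    shear T (X (.inl j) : 𝒮) = X (.inl j) := by
  simp [shear]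

lemma shear_X_inr (T : Finset (Fin m)) (j : Fin m) :
    shear T (X (.inr j) : 𝒮) = if j ∈ T then X (.inr j) + X (.inl j) else X (.inr j) := by
  simp [shear]

@[simp] lemma normSubst_X_inl (T : Finset (Fin m)) (j : Fin m) :
    normSubst T (X (.inl j) : 𝒮) = X (.inl j) := by
  simp [normSubst, normSubstVars]

lemma normSubst_X_inr (T : Finset (Fin m)) (j : Fin m) :
    normSubst T (X (.inr j) : 𝒮) = if j ∈ T then X (.inr j) else normY j := by
  simp [normSubst, normSubstVars]

lemma shear_empty : shear (R := R) (m := m) ∅ = AlgHom.id R _ :=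
  algHom_ext fun k => by cases k <;> simp [shear_X_inr]

lemma normSubst_univ : normSubst (R := R) (m := m) univ = AlgHom.id R _ :=
  algHom_ext fun k => by cases k <;> simp [normSubst_X_inr]

section CharTwo

variable [CharP R 2]

lemma shear_normY (T : Finset (Fin m)) (j : Fin m) : shear T (normY j : 𝒮) = normY j := by
  rw [normY, map_add, map_mul, map_pow, shear_X_inl, shear_X_inr]
  split_ifs
  · linear_combination (X (.inl j) * X (.inr j) + X (.inl j) ^ 2 : 𝒮) *
      (CharTwo.two_eq_zero : (2 : 𝒮) = 0)
  · rfl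

lemma shear_shear (T : Finset (Fin m)) (f : 𝒮) : shear T (shear T f) = f := by
  suffices (shear T).comp (shear T) = AlgHom.id R 𝒮 from DFunLike.congr_fun this f
  refine algHom_ext fun k => ?_
  rcases k with j | j
  · simp
  · simp only [AlgHom.comp_apply, shear_X_inr, AlgHom.id_apply]
    split_ifs
    · rw [map_add, shear_X_inr, if_pos ‹_›, shear_X_inl]
      linear_combination (X (.inl j) : 𝒮) * (CharTwo.two_eq_zero : (2 : 𝒮) = 0)
    · rw [shear_X_inr, if_neg ‹_›]

lemma shear_comp_normSubst (U T : Finset (Fin m)) :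
    (shear U).comp (normSubst T) = (normSubst T).comp (shear (U ∩ T) : 𝒮 →ₐ[R] 𝒮) := by
  refine algHom_ext fun k => ?_
  rcases k with j | j
  · simp
  · simp only [AlgHom.comp_apply, normSubst_X_inr, shear_X_inr, mem_inter]
    by_cases hT : j ∈ T <;> by_cases hU : j ∈ U <;>
      simp [hT, hU, shear_X_inr, normSubst_X_inr, shear_normY]

end CharTwo

lemma xToZero_comp_shear {t : Fin m} {T : Finset (Fin m)} (ht : t ∉ T) :
    (xToZero t).comp (shear T) = (shear T).comp (xToZero t : 𝒮 →ₐ[R] 𝒮) := by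
  refine algHom_ext fun k => ?_
  rcases k with j | j
  · by_cases hj : j = t
    · subst hj
      simp [xToZero]
    · simp [xToZero, hj]
  · by_cases hj : j ∈ T
    · have : j ≠ t := by rintro rfl; exact ht hj
      simp [xToZero, shear_X_inr, hj, this]
    · simp [xToZero, shear_X_inr, hj]

lemma exists_eq_xToZero_add_X_mul (t : Fin m) (p : 𝒮) :
    ∃ q, p = xToZero t p + X (.inl t) * q := by
  induction p using MvPolynomial.induction_on with
  | C a => exact ⟨0, by simp [xToZero]⟩
  | add p q hp hq =>
    obtain ⟨a, ha⟩ := hp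
    obtain ⟨b, hb⟩ := hq
    exact ⟨a + b, by rw [map_add]; linear_combination ha + hb⟩
  | mul_X p k hp =>
    obtain ⟨a, ha⟩ := hp
    by_cases hk : k = .inl t
    · subst hk
      exact ⟨p, by simp [xToZero]; ring⟩
    · refine ⟨a * X k, ?_⟩
      rw [map_mul, xToZero, aeval_X, Function.update_of_ne hk, ← xToZero]
      linear_combination X k * ha

lemma isIntegral_adjoin_normSubstVars [Nontrivial R] (T : Finset (Fin m)) :
    Algebra.IsIntegral (Algebra.adjoin R (Set.range (normSubstVars T : _ → 𝒮))) 𝒮 := by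
  set A := Algebra.adjoin R (Set.range (normSubstVars T : _ → 𝒮))
  have hmem (a : 𝒮) (ha : a ∈ A) : IsIntegral A a := isIntegral_algebraMap (x := (⟨a, ha⟩ : A))
  have hv (k) : normSubstVars T k ∈ A := Algebra.subset_adjoin ⟨k, rfl⟩
  have hX : ∀ k, IsIntegral A (X k : 𝒮) := by
    rintro (j | j)
    · exact hmem _ (hv (.inl j))
    by_cases hj : j ∈ T
    · simpa [normSubstVars, hj] using hmem _ (hv (.inr j))
    · -- `y_j` is a root of `Y² + x_j Y - n_j`
      let p : Polynomial A := .X ^ 2 + .C ⟨X (.inl j), hv (.inl j)⟩ * .X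
      have hp : p.Monic :=
        Polynomial.monic_X_pow_add ((Polynomial.degree_C_mul_X_le _).trans_lt (by norm_num))
      have hpdeg : p.natDegree = 2 := by
        simp only [p]
        compute_degree!
      refine IsIntegral.of_aeval_monic hp (by rw [hpdeg]; norm_num) ?_
      have : Polynomial.aeval (X (.inr j) : 𝒮) p = normSubstVars T (.inr j) := by
        simp [p, normSubstVars, hj, normY]
      exact this ▸ hmem _ (hv (.inr j))
  refine ⟨fun f => ?_⟩
  have hle : Algebra.adjoin R (Set.range X) ≤ (integralClosure A 𝒮).restrictScalars R :=
    Algebra.adjoin_le (Set.range_subset_iff.2 hX)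
  exact hle (by rw [adjoin_range_X]; trivial)

/-- `S` is integral over the image of `normSubst T`, which is generated by `2m = trdeg S`
elements; these are therefore algebraically independent. -/
lemma normSubst_injective [IsDomain R] (T : Finset (Fin m)) :
    Function.Injective (normSubst T : 𝒮 → 𝒮) := by
  have := isIntegral_adjoin_normSubstVars (m := m) (R := R) T
  have hT := Algebra.IsAlgebraic.isTranscendenceBasis_of_lift_le_trdeg_of_finite R
    (normSubstVars T : _ → 𝒮) (by rw [MvPolynomial.trdeg_of_isDomain]; simp)
  exact algebraicIndependent_iff_injective_aeval.1 hT.1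

lemma normSubst_insert_X_of_ne {t : Fin m} {T : Finset (Fin m)} {k : Fin m ⊕ Fin m}
    (hk : k ≠ .inr t) : normSubst (insert t T) (X k : 𝒮) = normSubst T (X k) := by
  rcases k with j | j
  · simp
  · have : j ≠ t := fun h => hk (h ▸ rfl)
    simp [normSubst_X_inr, this]

lemma exists_eq_add_mul_X_inr_of_mem_range {t : Fin m} {T : Finset (Fin m)} (ht : t ∉ T)
    {f : 𝒮} (hf : f ∈ (normSubst (insert t T)).range) :
    ∃ a ∈ (normSubst T).range, ∃ b ∈ (normSubst T).range, f = a + b * X (.inr t) := by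
  rw [← Algebra.map_top, ← adjoin_range_X, AlgHom.map_adjoin, ← Set.range_comp] at hf
  induction hf using Algebra.adjoin_induction with
  | mem g hg =>
    obtain ⟨k, rfl⟩ := hg
    by_cases hk : k = .inr t
    · subst hk
      exact ⟨0, zero_mem _, 1, one_mem _, by simp [normSubst_X_inr]⟩
    · refine ⟨_, ⟨X k, rfl⟩, 0, zero_mem _, ?_⟩
      simp [normSubst_insert_X_of_ne hk]
  | algebraMap r =>
    exact ⟨algebraMap R 𝒮 r, Subalgebra.algebraMap_mem _ r, 0, zero_mem _, by simp⟩
  | add f g _ _ hf hg =>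
    obtain ⟨a, ha, b, hb, rfl⟩ := hf
    obtain ⟨c, hc, d, hd, rfl⟩ := hg
    exact ⟨a + c, add_mem ha hc, b + d, add_mem hb hd, by ring⟩
  | mul f g _ _ hf hg =>
    obtain ⟨a, ha, b, hb, rfl⟩ := hf
    obtain ⟨c, hc, d, hd, rfl⟩ := hg
    have hx : (X (.inl t) : 𝒮) ∈ (normSubst T).range := ⟨X (.inl t), by simp⟩
    have hn : (normY t : 𝒮) ∈ (normSubst T).range :=
      ⟨X (.inr t), by simp [normSubst_X_inr, ht]⟩
    have h1 : a * c + b * d * normY t ∈ (normSubst T).range :=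
      Subalgebra.add_mem _ (Subalgebra.mul_mem _ ha hc)
        (Subalgebra.mul_mem _ (Subalgebra.mul_mem _ hb hd) hn)
    have h2 : a * d + b * c - b * d * X (.inl t) ∈ (normSubst T).range :=
      Subalgebra.sub_mem _ (Subalgebra.add_mem _ (Subalgebra.mul_mem _ ha hd)
        (Subalgebra.mul_mem _ hb hc)) (Subalgebra.mul_mem _ (Subalgebra.mul_mem _ hb hd) hx)
    refine ⟨_, h1, _, h2, ?_⟩
    rw [normY]
    ring

/-- The shear of `y_t` alone fixes `C_T` and moves `y_t` by `x_t`. -/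
lemma add_mul_X_inr_injective [IsDomain R] [CharP R 2] {t : Fin m} {T : Finset (Fin m)}
    (ht : t ∉ T) {a b a' b' : 𝒮} (ha : a ∈ (normSubst T).range) (hb : b ∈ (normSubst T).range)
    (ha' : a' ∈ (normSubst T).range) (hb' : b' ∈ (normSubst T).range)
    (h : a + b * X (.inr t) = a' + b' * X (.inr t)) : a = a' ∧ b = b' := by
  have hfix : ∀ c ∈ (normSubst T).range, shear {t} c = (c : 𝒮) := by
    rintro _ ⟨c, rfl⟩
    have := DFunLike.congr_fun (shear_comp_normSubst {t} T) c
    rwa [singleton_inter_of_notMem ht, shear_empty] at this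
  have hσ := congrArg (shear {t}) h
  simp only [map_add, map_mul, hfix a ha, hfix b hb, hfix a' ha', hfix b' hb', shear_X_inr,
    if_pos (mem_singleton_self t)] at hσ
  have hb : (b - b') * X (.inl t) = (0 : 𝒮) := by linear_combination hσ - h
  have hb : b = b' := sub_eq_zero.1 ((mul_eq_zero.1 hb).resolve_right (X_ne_zero _))
  exact ⟨by linear_combination h - X (.inr t) * hb, hb⟩

lemma exists_eq_add_X_mul_of_shear_add_X_mul_eq [IsDomain R] {t : Fin m} {T : Finset (Fin m)} (ht : t ∉ T)
    {α β : 𝒮} (h : shear T α + X (.inl t) * β = α) :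
    ∃ α₀ α', α = α₀ + X (.inl t) * α' ∧ shear T α₀ = α₀ ∧ shear T α' = α' - β := by
  obtain ⟨α', hα'⟩ := exists_eq_xToZero_add_X_mul t α
  have hα₀ : shear T (xToZero t α) = xToZero t α := by
    have := congrArg (xToZero t) h
    rwa [map_add, map_mul, xToZero, aeval_X, Function.update_self, zero_mul, add_zero,
      ← xToZero, ← AlgHom.comp_apply, xToZero_comp_shear ht, AlgHom.comp_apply] at this
  refine ⟨xToZero t α, α', hα', hα₀, ?_⟩
  have hσ := congrArg (shear T) hα'
  rw [map_add, map_mul, hα₀, shear_X_inl] at hσ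
  have : X (.inl t) * (shear T α' - (α' - β)) = (0 : 𝒮) := by
    linear_combination -hσ + h + hα'
  exact sub_eq_zero.1 ((mul_eq_zero.1 this).resolve_left (X_ne_zero _))

lemma X_inl_mem_adjoin_generators (j : Fin m) :
    (X (.inl j) : 𝒮) ∈ Algebra.adjoin R (generators R m) := by
  have : shear univ (yMon {j}) - yMon {j} = (X (.inl j) : 𝒮) := by
    simp [yMon, shear_X_inr]
  exact this ▸ Algebra.subset_adjoin (Or.inr ⟨{j}, rfl⟩)

lemma range_normSubst_empty_le : (normSubst ∅).range ≤ Algebra.adjoin R (generators R m) := by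
  rw [normSubst, aeval_range]
  refine Algebra.adjoin_le (Set.range_subset_iff.2 ?_)
  rintro (j | j)
  · exact X_inl_mem_adjoin_generators j
  · exact Algebra.subset_adjoin (Or.inl ⟨j, by simp [normSubstVars]⟩)

lemma shear_mul_yMon_sub_mem_adjoin [CharP R 2] (f : 𝒮) (J : Finset (Fin m)) :
    shear univ (f * yMon J) - f * yMon J ∈ Algebra.adjoin R (generators R m) := by
  induction f using MvPolynomial.induction_on generalizing J with
  | C a =>
    rw [map_mul, algHom_C, algebraMap_eq, ← mul_sub, ← algebraMap_eq]
    exact Subalgebra.mul_mem _ (Subalgebra.algebraMap_mem _ a)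
      (Algebra.subset_adjoin (Or.inr ⟨J, rfl⟩))
  | add p q hp hq =>
    convert Subalgebra.add_mem _ (hp J) (hq J) using 1
    rw [add_mul, map_add]
    ring
  | mul_X p k hp =>
    rcases k with j | j
    · convert Subalgebra.mul_mem _ (X_inl_mem_adjoin_generators j) (hp J) using 1
      simp only [map_mul, shear_X_inl]
      ring
    by_cases hj : j ∈ J
    · have hy : X (.inr j) * yMon J =
          (normY j * yMon (J.erase j) - X (.inl j) * yMon J : 𝒮) := by
        rw [yMon, yMon, ← mul_prod_erase J (fun j => (X (.inr j) : 𝒮)) hj, normY]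
        ring
      convert Subalgebra.sub_mem _
        (Subalgebra.mul_mem _ (Algebra.subset_adjoin (s := generators R m) (Or.inl ⟨j, rfl⟩))
          (hp (J.erase j)))
        (Subalgebra.mul_mem _ (X_inl_mem_adjoin_generators j) (hp J)) using 1
      rw [mul_assoc, hy]
      simp only [map_mul, map_sub, shear_normY, shear_X_inl]
      ring
    · have hy : X (.inr j) * yMon J = (yMon (insert j J) : 𝒮) := (prod_insert hj).symm
      rw [mul_assoc, hy]
      exact hp (insert j J)

lemma shear_sub_mem_adjoin [CharP R 2] (f : 𝒮) :
    shear univ f - f ∈ Algebra.adjoin R (generators R m) := by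
  simpa [yMon] using shear_mul_yMon_sub_mem_adjoin f ∅

lemma adjoin_generators_le_equalizer [CharP R 2] :
    Algebra.adjoin R (generators R m) ≤ (shear univ).equalizer (AlgHom.id R 𝒮) := by
  refine Algebra.adjoin_le ?_
  rintro _ (⟨j, rfl⟩ | ⟨J, rfl⟩) <;>
    simp only [SetLike.mem_coe, AlgHom.mem_equalizer, AlgHom.id_apply]
  · exact shear_normY _ j
  · rw [map_sub, shear_shear]
    linear_combination (yMon J - shear univ (yMon J) : 𝒮) * (CharTwo.two_eq_zero : (2 : 𝒮) = 0)

theorem mem_adjoin_generators_of_mem_range_normSubst [IsDomain R] [CharP R 2]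
    (T : Finset (Fin m)) :
    ∀ f ∈ (normSubst T).range, shear univ f = f → f ∈ Algebra.adjoin R (generators R m) := by
  induction T using Finset.induction_on with
  | empty => exact fun f hf _ => range_normSubst_empty_le hf
  | insert t T ht ih =>
    intro f hf hfix
    obtain ⟨a, ha, b, hb, rfl⟩ := exists_eq_add_mul_X_inr_of_mem_range ht hf
    obtain ⟨α, rfl⟩ := (AlgHom.mem_range _).1 ha
    obtain ⟨β, rfl⟩ := (AlgHom.mem_range _).1 hb
    set N := normSubst (R := R) T
    have hσN (γ : 𝒮) : shear univ (N γ) = N (shear T γ) := by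
      simpa using DFunLike.congr_fun (shear_comp_normSubst univ T) γ
    have hσy : shear univ (X (.inr t) : 𝒮) = X (.inr t) + X (.inl t) := by simp [shear_X_inr]
    have hNx : N (X (.inl t)) = X (.inl t) := normSubst_X_inl T t
    obtain ⟨hα, hβ⟩ := add_mul_X_inr_injective ht
      (N.mem_range_self (shear T α + X (.inl t) * shear T β)) (N.mem_range_self (shear T β))
      (N.mem_range_self α) (N.mem_range_self β) <| by
        rw [map_add, map_mul, hNx, ← hfix, map_add, map_mul, hσN, hσN, hσy]
        ring
    rw [normSubst_injective T hβ] at hα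
    obtain ⟨α₀, α', rfl, hα₀, hα'⟩ :=
      exists_eq_add_X_mul_of_shear_add_X_mul_eq ht (normSubst_injective T hα)
    set g := N α' * (X (.inl t) - X (.inr t))
    have hf : N (α₀ + X (.inl t) * α') + N β * X (.inr t) = N α₀ + (shear univ g - g) := by
      rw [map_mul, map_sub, hσN, hα', shear_X_inl, hσy, map_sub, map_add, map_mul, hNx]
      linear_combination X (.inl t) * N α' * (CharTwo.two_eq_zero : (2 : 𝒮) = 0)
    rw [hf]
    exact Subalgebra.add_mem _ (ih _ (N.mem_range_self _) (by rw [hσN, hα₀]))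
      (shear_sub_mem_adjoin g)

theorem adjoin_generators_eq_equalizer [IsDomain R] [CharP R 2] :
    Algebra.adjoin R (generators R m) = (shear univ).equalizer (AlgHom.id R 𝒮) := by
  refine le_antisymm adjoin_generators_le_equalizer fun f hf => ?_
  refine mem_adjoin_generators_of_mem_range_normSubst univ f ?_ hf
  rw [normSubst_univ]
  exact AlgHom.mem_range_self _ f

end CharTwoShear

theorem stmt_0 (F : Type) [Field F] [CharP F 2] (m : ℕ)
    (σ : MvPolynomial (Fin m ⊕ Fin m) F ≃ₐ[F] MvPolynomial (Fin m ⊕ Fin m) F)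
    (hx : ∀ j : Fin m, σ (X (Sum.inl j)) = X (Sum.inl j))
    (hy : ∀ j : Fin m, σ (X (Sum.inr j)) = X (Sum.inr j) + X (Sum.inl j)) :
    Algebra.adjoin F
      ((Set.range fun i : Fin m =>
          (X (Sum.inr i) : MvPolynomial (Fin m ⊕ Fin m) F) ^ 2 + X (Sum.inl i) * X (Sum.inr i)) ∪
        (Set.range fun J : Finset (Fin m) =>
          σ (∏ j ∈ J, X (Sum.inr j)) -
            ∏ j ∈ J, (X (Sum.inr j) : MvPolynomial (Fin m ⊕ Fin m) F)))
      = AlgHom.equalizer (σ : MvPolynomial (Fin m ⊕ Fin m) F →ₐ[F] _) (AlgHom.id F _) := by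
  have hσ : (σ : MvPolynomial (Fin m ⊕ Fin m) F →ₐ[F] _) = CharTwoShear.shear univ :=
    algHom_ext fun k => by rcases k with j | j <;> simp [hx, hy, CharTwoShear.shear_X_inr]
  have hσ' (f : MvPolynomial (Fin m ⊕ Fin m) F) : σ f = CharTwoShear.shear univ f :=
    DFunLike.congr_fun hσ f
  simp only [hσ', hσ]
  exact CharTwoShear.adjoin_generators_eq_equalizer
end

section
/- Let σ act on S = F[x_1,…,x_m,y_1,…,y_m] as described, let f ∈ S^σ and let a_1,…,a_m be nonnegative integers. (i) If the monomial y_1^{a_1}⋯y_m^{a_m} has nonzero coefficient in f, then a_i is even for every i ∈ {1,…,m}. (ii) If the monomial y_1^{a_1}⋯y_{m−1}^{a_{m−1}} y_m x_m has nonzero coefficient in f, then a_i is even for every i ∈ {1,…,m−1}. -/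
/-!
Write `g|₀` for the specialisation `x = 0` of `g`, a polynomial in the `y`'s
(`killCompl Sum.inr_injective g`). Since `σ` fixes every `x_j` we have `(σ g)|₀ = g|₀`,
and the chain rule gives `∂_{x_k} (σ g) = σ (∂_{x_k} g + ∂_{y_k} g)`. For `σ f = f`,
taking `(∂_{x_i} ·)|₀` of `f = σ f` yields `∂_{y_i} (f|₀) = 0`: every exponent of a monomial
`y^a` appearing in `f` vanishes in `F`, which is (i). Doing the same to
`∂_{x_i} f = σ (∂_{x_i} f + ∂_{y_i} f)` with `∂_{x_k}` yields
`∂_{y_i} ((∂_{x_k} f)|₀) + ∂_{y_k} ((∂_{x_i} f)|₀) = 0`. The coefficient of `y^b / y_i` on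
the left is `b_i` times the coefficient of `x_k y^b` in `f`, while on the right it carries the
factor `b_k + 1`, which is `0` in characteristic `2` when `b_k` is odd; this is (ii).
-/

open MvPolynomial

section PDeriv

variable {R σ : Type*} [CommSemiring R]

theorem killCompl_pderiv {τ : Type*} {f : σ → τ} (hf : Function.Injective f) (x : σ)
    (p : MvPolynomial τ R) : killCompl hf (pderiv (f x) p) = pderiv x (killCompl hf p) := by
  classical
  induction p using MvPolynomial.induction_on with
  | C a => simp
  | add p q hp hq => simp [hp, hq]
  | mul_X p n hp =>
    simp only [Derivation.leibniz, smul_eq_mul, map_add, map_mul, hp]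
    by_cases hn : n ∈ Set.range f
    · obtain ⟨y, rfl⟩ := hn
      simp [killCompl, pderiv_X, Pi.single_apply, hf.eq_iff, apply_ite]
    · have hX : killCompl hf (X n : MvPolynomial τ R) = 0 := by
        rw [killCompl, aeval_X, dif_neg hn]
      rw [hX, pderiv_X_of_ne fun h => hn ⟨x, h.symm⟩]
      simp

theorem coeff_tsub_single_pderiv {p : MvPolynomial σ R} {d : σ →₀ ℕ} {i : σ} (hd : d i ≠ 0) :
    coeff (d - Finsupp.single i 1) (pderiv i p) = coeff d p * d i := by
  have hle : Finsupp.single i 1 ≤ d := Finsupp.single_le_iff.mpr (Nat.one_le_iff_ne_zero.mpr hd)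
  rw [coeff_pderiv, tsub_add_cancel_of_le hle, Finsupp.tsub_apply, Finsupp.single_eq_same,
    ← Nat.cast_add_one, Nat.sub_add_cancel (Nat.one_le_iff_ne_zero.mpr hd)]

theorem coeff_mul_natCast_eq_zero_of_pderiv_eq_zero {p : MvPolynomial σ R} {i : σ}
    (h : pderiv i p = 0) (d : σ →₀ ℕ) : coeff d p * d i = 0 := by
  by_cases hd : d i = 0
  · simp [hd]
  · rw [← coeff_tsub_single_pderiv hd, h, coeff_zero]

theorem coeff_mul_natCast_eq_zero_of_pderiv_add_pderiv_eq_zero [CharP R 2]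
    {p q : MvPolynomial σ R} {i k : σ} (h : pderiv i p + pderiv k q = 0) (hik : i ≠ k)
    {d : σ →₀ ℕ} (hd : Odd (d k)) : coeff d p * d i = 0 := by
  by_cases hdi : d i = 0
  · simp [hdi]
  have hdk : (d k : R) + 1 = 0 := by
    exact_mod_cast (CharP.cast_eq_zero_iff R 2 _).mpr hd.add_one.two_dvd
  have := congr(coeff (d - Finsupp.single i 1) $h)
  rwa [coeff_add, coeff_tsub_single_pderiv hdi, coeff_pderiv, Finsupp.tsub_apply,
    Finsupp.single_eq_of_ne hik.symm, tsub_zero, hdk, mul_zero, add_zero, coeff_zero] at this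

end PDeriv

theorem pderiv_pderiv_comm {R σ : Type*} [CommRing R] (i j : σ) (p : MvPolynomial σ R) :
    pderiv i (pderiv j p) = pderiv j (pderiv i p) := by
  have h : ⁅pderiv i, pderiv j⁆ = (0 : Derivation R (MvPolynomial σ R) (MvPolynomial σ R)) :=
    derivation_ext fun n => by
      classical
      rw [Derivation.commutator_apply]
      simp [pderiv_X, Pi.single_apply, apply_ite]
  have := congr($h p)
  rwa [Derivation.commutator_apply, Derivation.zero_apply, sub_eq_zero] at this

section Shear

variable {R ι : Type*}

section CommSemiring

variable [CommSemiring R]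

/-- `shear` fixes `x_j = X (.inl j)` and sends `y_j = X (.inr j)` to `y_j + x_j`. -/
noncomputable def shear : MvPolynomial (ι ⊕ ι) R →ₐ[R] MvPolynomial (ι ⊕ ι) R :=
  aeval (Sum.elim (fun j => X (.inl j)) (fun j => X (.inr j) + X (.inl j)))

@[simp] theorem shear_X_inl (j : ι) :
    shear (X (.inl j) : MvPolynomial (ι ⊕ ι) R) = X (.inl j) :=
  aeval_X _ _

@[simp] theorem shear_X_inr (j : ι) :
    shear (X (.inr j) : MvPolynomial (ι ⊕ ι) R) = X (.inr j) + X (.inl j) :=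
  aeval_X _ _

theorem killCompl_inr_shear (p : MvPolynomial (ι ⊕ ι) R) :
    killCompl Sum.inr_injective (shear p) = killCompl Sum.inr_injective p := by
  have h : (killCompl Sum.inr_injective).comp shear =
      (killCompl Sum.inr_injective : MvPolynomial (ι ⊕ ι) R →ₐ[R] _) := by
    refine algHom_ext fun n => ?_
    rcases n with j | j <;> simp [killCompl]
  exact congr($h p)

theorem pderiv_inl_shear (k : ι) (p : MvPolynomial (ι ⊕ ι) R) :
    pderiv (.inl k) (shear p) = shear (pderiv (.inl k) p + pderiv (.inr k) p) := by
  classical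
  induction p using MvPolynomial.induction_on with
  | C a => simp
  | add p q hp hq => simp only [map_add, hp, hq]; ring
  | mul_X p n hp =>
    simp only [Derivation.leibniz, smul_eq_mul, map_add, map_mul, hp]
    rcases n with j | j <;> simp [pderiv_X, Pi.single_apply, apply_ite] <;> ring

theorem killCompl_inr_pderiv_inl_shear (k : ι) (p : MvPolynomial (ι ⊕ ι) R) :
    killCompl Sum.inr_injective (pderiv (.inl k) (shear p)) =
      killCompl Sum.inr_injective (pderiv (.inl k) p) +
        pderiv k (killCompl Sum.inr_injective p) := by
  rw [pderiv_inl_shear, killCompl_inr_shear, map_add, killCompl_pderiv]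

theorem coeff_killCompl_inr (b : ι →₀ ℕ) (p : MvPolynomial (ι ⊕ ι) R) :
    coeff b (killCompl Sum.inr_injective p) = coeff (Finsupp.sumElim 0 b) p := by
  rw [coeff_killCompl, Finsupp.sumElim_eq_add, Finsupp.mapDomain_zero, zero_add]

theorem coeff_killCompl_inr_pderiv_inl (b : ι →₀ ℕ) (k : ι) (p : MvPolynomial (ι ⊕ ι) R) :
    coeff b (killCompl Sum.inr_injective (pderiv (.inl k) p)) =
      coeff (Finsupp.sumElim (Finsupp.single k 1) b) p := by
  rw [coeff_killCompl_inr, coeff_pderiv, Finsupp.sumElim_inl, Finsupp.coe_zero, Pi.zero_apply,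
    Nat.cast_zero, zero_add, mul_one]
  congr 1
  ext (j | j) <;> simp [Finsupp.single_apply_left Sum.inl_injective]

end CommSemiring

variable [CommRing R] {f : MvPolynomial (ι ⊕ ι) R}

theorem pderiv_killCompl_inr_eq_zero_of_shear_eq (hf : shear f = f) (i : ι) :
    pderiv i (killCompl Sum.inr_injective f) = 0 := by
  have h := killCompl_inr_pderiv_inl_shear i f
  rwa [hf, left_eq_add] at h

theorem pderiv_killCompl_inr_pderiv_inl_add_eq_zero_of_shear_eq (hf : shear f = f) (i k : ι) :
    pderiv i (killCompl Sum.inr_injective (pderiv (.inl k) f)) +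
      pderiv k (killCompl Sum.inr_injective (pderiv (.inl i) f)) = 0 := by
  have hi : pderiv (.inl i) f = shear (pderiv (.inl i) f + pderiv (.inr i) f) := by
    rw [← pderiv_inl_shear, hf]
  have h := killCompl_inr_pderiv_inl_shear k (pderiv (.inl i) f + pderiv (.inr i) f)
  rwa [← hi, map_add, map_add, map_add, pderiv_pderiv_comm (R := R) (Sum.inl k) (Sum.inr i),
    killCompl_pderiv, killCompl_pderiv, pderiv_killCompl_inr_eq_zero_of_shear_eq hf i, add_zero,
    add_assoc, left_eq_add] at h

end Shear

theorem stmt_2 (F : Type) [Field F] [CharP F 2] (m : ℕ) (hm : 1 ≤ m)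
    (σ : MvPolynomial (Fin m ⊕ Fin m) F ≃ₐ[F] MvPolynomial (Fin m ⊕ Fin m) F)
    (hx : ∀ j : Fin m, σ (X (Sum.inl j)) = X (Sum.inl j))
    (hy : ∀ j : Fin m, σ (X (Sum.inr j)) = X (Sum.inr j) + X (Sum.inl j))
    (f : MvPolynomial (Fin m ⊕ Fin m) F) (hf : σ f = f) (a : Fin m → ℕ) :
    (coeff (Finsupp.equivFunOnFinite.symm
        (Sum.elim (fun _ : Fin m => 0) a)) f ≠ 0 →
      ∀ i : Fin m, Even (a i)) ∧
    (coeff (Finsupp.equivFunOnFinite.symm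
        (Sum.elim (fun i : Fin m => if i = (⟨m - 1, by omega⟩ : Fin m) then 1 else 0)
          (fun i : Fin m => if i = (⟨m - 1, by omega⟩ : Fin m) then 1 else a i))) f ≠ 0 →
      ∀ i : Fin m, i ≠ (⟨m - 1, by omega⟩ : Fin m) → Even (a i)) := by
  have hshear : (σ : MvPolynomial (Fin m ⊕ Fin m) F →ₐ[F] _) = shear :=
    algHom_ext fun n => by rcases n with j | j <;> simp [hx, hy]
  have hf' : shear f = f := by rw [← hshear]; exact hf
  have even_of_cast {n : ℕ} (h : (n : F) = 0) : Even n :=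
    even_iff_two_dvd.mpr ((CharP.cast_eq_zero_iff F 2 n).mp h)
  set M : Fin m := ⟨m - 1, by omega⟩
  constructor
  · intro hc i
    have hexp : Finsupp.sumElim 0 (Finsupp.equivFunOnFinite.symm a) =
        Finsupp.equivFunOnFinite.symm (Sum.elim (fun _ : Fin m => 0) a) := by
      ext (j | j) <;> rfl
    have h := coeff_mul_natCast_eq_zero_of_pderiv_eq_zero
      (pderiv_killCompl_inr_eq_zero_of_shear_eq hf' i) (Finsupp.equivFunOnFinite.symm a)
    rw [coeff_killCompl_inr, hexp] at h
    exact even_of_cast ((mul_eq_zero.mp h).resolve_left hc)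
  · intro hc i hi
    set b : Fin m →₀ ℕ := Finsupp.equivFunOnFinite.symm (fun j => if j = M then 1 else a j)
    have h := coeff_mul_natCast_eq_zero_of_pderiv_add_pderiv_eq_zero
      (pderiv_killCompl_inr_pderiv_inl_add_eq_zero_of_shear_eq hf' i M) hi
      (d := b) (by simp [b])
    have hexp : Finsupp.sumElim (Finsupp.single M 1) b =
        Finsupp.equivFunOnFinite.symm (Sum.elim (fun i : Fin m => if i = M then 1 else 0)
          (fun i : Fin m => if i = M then 1 else a i)) := by
      ext (j | j) <;> simp [b, Finsupp.single_apply, eq_comm]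
    rw [coeff_killCompl_inr_pderiv_inl, hexp] at h
    have hbi : b i = a i := by simp [b, hi]
    rw [hbi] at h
    exact even_of_cast ((mul_eq_zero.mp h).resolve_left hc)
end

section
/- For every λ ∈ F and every m ≥ 2, the set H = {x_1,…,x_m} ∪ {N_i : 1 ≤ i ≤ ℓ} ∪ {N_G(y_j) : ℓ < j ≤ m} is a block hsop for S with top class β = y_1⋯y_ℓ·y_{ℓ+1}³⋯y_m³; that is, the 2m elements of H are algebraically independent over F and the set of monomials dividing β is a basis of S as a free module over the subalgebra F[H] generated by H. -/
/-!
STATEMENT 4: For the representation V_{m,λ} of the Klein four group G = ⟨σ1,σ2⟩ over a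
field F of characteristic 2 (σ1(x_j)=σ2(x_j)=x_j, σ1(y_j)=y_j+x_j, σ2(y_1)=y_1+λx_1,
σ2(y_j)=y_j+λx_j+x_{j−1} for j>1), for every λ ∈ F and m ≥ 2, with ℓ = ⌊m/2⌋, the set
H = {x_1,…,x_m} ∪ {N_i : 1 ≤ i ≤ ℓ} ∪ {N_G(y_j) : ℓ < j ≤ m} is a block hsop with top
class β = y_1⋯y_ℓ·y_{ℓ+1}³⋯y_m³: the 2m elements of H (as a family indexed by
Fin m ⊕ Fin m) are algebraically independent over F, and the monomials dividing β
(i.e. ∏ y_i^{d_i} with d_i ≤ 1 for i ≤ ℓ and d_i ≤ 3 for i > ℓ) form a basis of S as a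
module over the subalgebra F[H].
-/

open MvPolynomial

noncomputable section

/-- The variable x_i (1-based index); by convention 0 for i outside {1,…,m}. -/
def xv (F : Type) [Field F] (m : ℕ) (i : ℕ) : MvPolynomial (Fin m ⊕ Fin m) F :=
  if h : 1 ≤ i ∧ i ≤ m then X (Sum.inl ⟨i - 1, by omega⟩) else 0

/-- The variable y_i (1-based index); by convention 0 for i outside {1,…,m}. -/
def yv (F : Type) [Field F] (m : ℕ) (i : ℕ) : MvPolynomial (Fin m ⊕ Fin m) F :=
  if h : 1 ≤ i ∧ i ≤ m then X (Sum.inr ⟨i - 1, by omega⟩) else 0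

/-- n_i = y_i² + x_i y_i. -/
def nv (F : Type) [Field F] (m : ℕ) (i : ℕ) : MvPolynomial (Fin m ⊕ Fin m) F :=
  yv F m i ^ 2 + xv F m i * yv F m i

/-- u_{ab} = x_a y_b + x_b y_a. -/
def uv (F : Type) [Field F] (m : ℕ) (a b : ℕ) : MvPolynomial (Fin m ⊕ Fin m) F :=
  xv F m a * yv F m b + xv F m b * yv F m a

/-- N_i = n_i + (λ²+λ)·Σ_{j=1}^{i} u_{i−j+1,i+j} + Σ_{j=1}^{i−1} (u_{i−j,i+j} + u_{i−j,i+j−1}). -/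
def Nv (F : Type) [Field F] (m : ℕ) (lam : F) (i : ℕ) : MvPolynomial (Fin m ⊕ Fin m) F :=
  nv F m i + C (lam ^ 2 + lam) * ∑ j ∈ Finset.Icc 1 i, uv F m (i - j + 1) (i + j)
    + ∑ j ∈ Finset.Icc 1 (i - 1), (uv F m (i - j) (i + j) + uv F m (i - j) (i + j - 1))

/-- The norm N_G(y_j), the product of the distinct elements of the G-orbit
{y_j, y_j+x_j, y_j+λx_j+x_{j−1}, y_j+(λ+1)x_j+x_{j−1}} of y_j (these four elements are
pairwise distinct in every case in which the norm is used). -/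
def normYv (F : Type) [Field F] (m : ℕ) (lam : F) (j : ℕ) : MvPolynomial (Fin m ⊕ Fin m) F :=
  yv F m j * (yv F m j + xv F m j) * (yv F m j + C lam * xv F m j + xv F m (j - 1)) *
    (yv F m j + C (lam + 1) * xv F m j + xv F m (j - 1))

/-- t_j = u_{12}·x_{j−1} + u_{1j}·x_1. -/
def tv (F : Type) [Field F] (m : ℕ) (j : ℕ) : MvPolynomial (Fin m ⊕ Fin m) F :=
  uv F m 1 2 * xv F m (j - 1) + uv F m 1 j * xv F m 1

/-- The invariant subalgebra S^G for G = ⟨σ1, σ2⟩. -/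
def invSub {F : Type} [Field F] {τ : Type} (σ1 σ2 : MvPolynomial τ F ≃ₐ[F] MvPolynomial τ F) :
    Subalgebra F (MvPolynomial τ F) :=
  AlgHom.equalizer (σ1 : MvPolynomial τ F →ₐ[F] MvPolynomial τ F) (AlgHom.id F _) ⊓
    AlgHom.equalizer (σ2 : MvPolynomial τ F →ₐ[F] MvPolynomial τ F) (AlgHom.id F _)

/-- The transfer Tr(f) = Σ_{g ∈ G} g·f for the Klein four group G = {1, σ1, σ2, σ1σ2}. -/
def trf {F : Type} [Field F] {τ : Type} (σ1 σ2 : MvPolynomial τ F ≃ₐ[F] MvPolynomial τ F)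
    (f : MvPolynomial τ F) : MvPolynomial τ F :=
  f + σ1 f + σ2 f + σ1 (σ2 f)

/-- Products of two homogeneous G-invariants of positive degree; the span of this set over
S^G is (S^G_+)², the square of the ideal of S^G generated by the homogeneous invariants of
positive degree.  An invariant is *indecomposable* iff it does not lie in this span. -/
def decompSet {F : Type} [Field F] {τ : Type}
    (σ1 σ2 : MvPolynomial τ F ≃ₐ[F] MvPolynomial τ F) : Set (MvPolynomial τ F) :=
  {f | ∃ a b : MvPolynomial τ F,
    (σ1 a = a ∧ σ2 a = a ∧ ∃ d, 0 < d ∧ a.IsHomogeneous d) ∧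
    (σ1 b = b ∧ σ2 b = b ∧ ∃ d, 0 < d ∧ b.IsHomogeneous d) ∧ f = a * b}

/-!
Give every `x_i` weight `0` and every `y_i` weight `1`. Each element of `H` is then a power
`X_v ^ e_v` of a variable plus terms of smaller weight (`e_v = 1` for `x_i`, `2` for `N_i`, `4` for
`N_G(y_j)`), so the products `∏ H_v ^ a_v * ∏ y_v ^ d_v` with `d_v < e_v` are triangular with
respect to the monomials `X ^ (e * a + d)`, which run through every monomial exactly once by
division with remainder. Hence they form an `F`-basis of `S`. Taking `d = 0` gives algebraic
independence, and since `F[H]` is spanned over `F` by the `∏ H_v ^ a_v`, the `∏ y_v ^ d_v` form an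
`F[H]`-basis.
-/

open Submodule Set Function
open Finsupp (weight)
open scoped Pointwise

namespace MvPolynomial

section WeightFiltration

variable {ι κ R : Type*} [CommRing R] {w : ι → ℕ}

variable (R) in
def weightLT (w : ι → ℕ) (n : ℕ) : Submodule R (MvPolynomial ι R) :=
  restrictSupport R {c | weight w c < n}

lemma weightLT_mono {n n' : ℕ} (h : n ≤ n') : weightLT R w n ≤ weightLT R w n' :=
  restrictSupport_mono R fun _ hc => lt_of_lt_of_le hc h

lemma mul_mem_restrictSupport {s t u : Set (ι →₀ ℕ)} (h : s + t ⊆ u)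
    {p q : MvPolynomial ι R} (hp : p ∈ restrictSupport R s) (hq : q ∈ restrictSupport R t) :
    p * q ∈ restrictSupport R u :=
  restrictSupport_mono R h (restrictSupport_add R s t ▸ mul_mem_mul hp hq)

lemma mul_mem_weightLT {n k : ℕ} {p q : MvPolynomial ι R}
    (hp : p ∈ weightLT R w n) (hq : q ∈ weightLT R w k) : p * q ∈ weightLT R w (n + k) :=
  mul_mem_restrictSupport (by
    rintro _ ⟨a, ha : weight w a < n, b, hb : weight w b < k, rfl⟩
    show weight w (a + b) < n + k
    rw [map_add]; omega) hp hq

lemma monomial_mul_mem_weightLT (c : ι →₀ ℕ) (r : R) {k : ℕ} {q : MvPolynomial ι R}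
    (hq : q ∈ weightLT R w k) : monomial c r * q ∈ weightLT R w (weight w c + k) :=
  mul_mem_restrictSupport (s := {c}) (by
    rintro _ ⟨a, rfl, b, hb : weight w b < k, rfl⟩
    show weight w (a + b) < weight w a + k
    rw [map_add]; omega) ((monomial_mem_restrictSupport R).2 (Or.inl rfl)) hq

lemma IsWeightedHomogeneous.mem_weightLT {p : MvPolynomial ι R} {k n : ℕ}
    (hp : IsWeightedHomogeneous w p k) (h : k < n) : p ∈ weightLT R w n :=
  fun _ hc => (hp (mem_support_iff.1 hc)).trans_lt h

def HasLeadingMonomial (w : ι → ℕ) (p : MvPolynomial ι R) (c : ι →₀ ℕ) : Prop :=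
  p - monomial c 1 ∈ weightLT R w (weight w c)

lemma hasLeadingMonomial_monomial (c : ι →₀ ℕ) : HasLeadingMonomial w (monomial c (1 : R)) c := by
  simp [HasLeadingMonomial]

lemma hasLeadingMonomial_X (v : ι) : HasLeadingMonomial w (X v : MvPolynomial ι R) (.single v 1) :=
  hasLeadingMonomial_monomial _

lemma hasLeadingMonomial_X_pow (v : ι) (k : ℕ) :
    HasLeadingMonomial w (X v ^ k : MvPolynomial ι R) (.single v k) := by
  rw [X_pow_eq_monomial]
  exact hasLeadingMonomial_monomial _

namespace HasLeadingMonomial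

variable {p q : MvPolynomial ι R} {c c' : ι →₀ ℕ}

lemma add_of_mem_weightLT (hp : HasLeadingMonomial w p c) (hq : q ∈ weightLT R w (weight w c)) :
    HasLeadingMonomial w (p + q) c := by
  rw [HasLeadingMonomial, add_sub_right_comm]
  exact add_mem hp hq

lemma mul (hp : HasLeadingMonomial w p c) (hq : HasLeadingMonomial w q c') :
    HasLeadingMonomial w (p * q) (c + c') := by
  have hsplit : p * q - monomial (c + c') 1 = monomial c 1 * (q - monomial c' 1)
      + monomial c' 1 * (p - monomial c 1) + (p - monomial c 1) * (q - monomial c' 1) := by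
    have : monomial (c + c') (1 : R) = monomial c 1 * monomial c' 1 := by simp [monomial_mul]
    rw [this]; ring
  rw [HasLeadingMonomial, hsplit, map_add]
  refine add_mem (add_mem (monomial_mul_mem_weightLT _ _ hq) ?_) (mul_mem_weightLT hp hq)
  exact add_comm (weight w c) _ ▸ monomial_mul_mem_weightLT _ _ hp

lemma pow (hp : HasLeadingMonomial w p c) (k : ℕ) : HasLeadingMonomial w (p ^ k) (k • c) := by
  induction k with
  | zero => simpa using hasLeadingMonomial_monomial (R := R) (w := w) 0
  | succ k ih => simpa [pow_succ, succ_nsmul] using ih.mul hp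

lemma prod {s : Finset κ} {p : κ → MvPolynomial ι R} {c : κ → ι →₀ ℕ}
    (h : ∀ i ∈ s, HasLeadingMonomial w (p i) (c i)) :
    HasLeadingMonomial w (∏ i ∈ s, p i) (∑ i ∈ s, c i) := by
  classical
  induction s using Finset.induction_on with
  | empty => simpa using hasLeadingMonomial_monomial (R := R) (w := w) 0
  | insert i s hi ih =>
    rw [Finset.prod_insert hi, Finset.sum_insert hi]
    exact (h i (s.mem_insert_self i)).mul (ih fun j hj => h j (Finset.mem_insert_of_mem hj))

lemma coeff_eq_coeff_monomial (hp : HasLeadingMonomial w p c) {c' : ι →₀ ℕ}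
    (h : weight w c ≤ weight w c') : coeff c' p = coeff c' (monomial c 1) := by
  rw [← sub_eq_zero, ← coeff_sub]
  exact notMem_support_iff.1 fun hc => (hp hc).not_ge h

end HasLeadingMonomial

lemma linearIndependent_of_hasLeadingMonomial {B : κ → MvPolynomial ι R} {μ : κ → ι →₀ ℕ}
    (hμ : Injective μ) (hB : ∀ k, HasLeadingMonomial w (B k) (μ k)) : LinearIndependent R B := by
  classical
  rw [linearIndependent_iff']
  intro s f hf
  by_contra! hne
  obtain ⟨i, hi, hfi⟩ := hne
  obtain ⟨k₀, hk₀, hmax⟩ := (s.filter (f · ≠ 0)).exists_max_image (weight w ∘ μ)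
    ⟨i, Finset.mem_filter.2 ⟨hi, hfi⟩⟩
  rw [Finset.mem_filter] at hk₀
  -- the top-weight leading monomial `μ k₀` occurs in no other `B k` with `f k ≠ 0`
  have hcoeff := congrArg (coeff (μ k₀)) hf
  rw [coeff_sum, Finset.sum_eq_single k₀, coeff_smul, (hB k₀).coeff_eq_coeff_monomial le_rfl,
    coeff_monomial, if_pos rfl, smul_eq_mul, mul_one, coeff_zero] at hcoeff
  · exact hk₀.2 hcoeff
  · intro k hk hne
    by_cases hfk : f k = 0
    · rw [hfk, zero_smul, coeff_zero]
    · rw [coeff_smul, (hB k).coeff_eq_coeff_monomial (hmax k (Finset.mem_filter.2 ⟨hk, hfk⟩)),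
        coeff_monomial, if_neg (hμ.ne hne), smul_zero]
  · exact fun h => absurd hk₀.1 h

lemma weightLT_le_span_of_hasLeadingMonomial {B : κ → MvPolynomial ι R} {μ : κ → ι →₀ ℕ}
    (hμ : Surjective μ) (hB : ∀ k, HasLeadingMonomial w (B k) (μ k)) (n : ℕ) :
    weightLT R w n ≤ span R (range B) := by
  induction n with
  | zero =>
    rw [weightLT, restrictSupport_eq_span, span_le]
    rintro _ ⟨c, hc, rfl⟩
    exact absurd hc (Nat.not_lt_zero _)
  | succ n ih =>
    rw [weightLT, restrictSupport_eq_span, span_le]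
    rintro _ ⟨c, hc : weight w c < n + 1, rfl⟩
    obtain ⟨k, rfl⟩ := hμ c
    show monomial (μ k) (1 : R) ∈ _
    rw [← sub_sub_cancel (B k) (monomial (μ k) 1)]
    exact sub_mem (subset_span ⟨k, rfl⟩) (ih (weightLT_mono (Nat.lt_succ_iff.1 hc) (hB k)))

lemma span_eq_top_of_hasLeadingMonomial {B : κ → MvPolynomial ι R} {μ : κ → ι →₀ ℕ}
    (hμ : Surjective μ) (hB : ∀ k, HasLeadingMonomial w (B k) (μ k)) :
    span R (range B) = ⊤ := by
  rw [eq_top_iff, ← restrictSupport_univ, restrictSupport_eq_span, span_le]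
  rintro _ ⟨c, -, rfl⟩
  exact weightLT_le_span_of_hasLeadingMonomial hμ hB (weight w c + 1)
    ((monomial_mem_restrictSupport R).2 (Or.inl (Nat.lt_succ_self _)))

end WeightFiltration

section TowerOfSpans

variable {α β R S : Type*} [CommRing R] [CommRing S] [Algebra R S] {A : Subalgebra R S}
  {P : α → S} {Y : β → S}

lemma linearIndependent_of_linearIndependent_mul (hP : (A : Set S) ⊆ span R (range P))
    (hPY : LinearIndependent R fun x : α × β => P x.1 * Y x.2) : LinearIndependent A Y := by
  classical
  rw [linearIndependent_iff']
  intro s f hf d hd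
  choose γ hγ using fun d => Finsupp.mem_span_range_iff_exists_finsupp.1 (hP (f d).2)
  set T := s.biUnion fun d => (γ d).support
  have hfT : ∀ d ∈ s, (f d : S) = ∑ a ∈ T, γ d a • P a := fun d hd =>
    (hγ d).symm.trans <| Finsupp.sum_of_support_subset _
      (Finset.subset_biUnion_of_mem (fun d => (γ d).support) hd) (fun a r => r • P a)
      fun a _ => zero_smul R (P a)
  have hsum : ∑ x ∈ T ×ˢ s, γ x.2 x.1 • (P x.1 * Y x.2) = 0 := by
    rw [Finset.sum_product_right, ← hf]
    refine Finset.sum_congr rfl fun d hd => ?_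
    rw [Subalgebra.smul_def, hfT d hd, smul_eq_mul, Finset.sum_mul]
    simp only [smul_mul_assoc]
  have hγ0 : γ d = 0 := by
    ext a
    by_cases ha : a ∈ T
    · exact linearIndependent_iff'.1 hPY _ _ hsum (a, d) (Finset.mem_product.2 ⟨ha, hd⟩)
    · exact Finsupp.notMem_support_iff.1 fun h => ha (Finset.mem_biUnion.2 ⟨d, hd, h⟩)
  exact Subtype.ext (by rw [← hγ d, hγ0, Finsupp.sum_zero_index]; rfl)

lemma span_eq_top_of_span_mul_eq_top (hPA : ∀ a, P a ∈ A)
    (hPY : span R (range fun x : α × β => P x.1 * Y x.2) = ⊤) : span A (range Y) = ⊤ := by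
  rw [← restrictScalars_eq_top_iff R, eq_top_iff, ← hPY, span_le]
  rintro _ ⟨⟨a, d⟩, rfl⟩
  exact smul_mem (span A (range Y)) ⟨P a, hPA a⟩ (subset_span ⟨d, rfl⟩)

end TowerOfSpans

lemma adjoin_range_subset_span_aeval_monomial {ι R S : Type*} [CommRing R] [CommRing S]
    [Algebra R S] (g : ι → S) :
    (Algebra.adjoin R (range g) : Set S) ⊆
      span R (range fun a => aeval g (monomial a (1 : R))) := by
  rw [Algebra.adjoin_range_eq_range_aeval]
  rintro _ ⟨p, rfl⟩
  change aeval g p ∈ _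
  rw [p.as_sum, map_sum]
  refine sum_mem fun a _ => ?_
  rw [← mul_one (coeff a p), ← smul_eq_mul, ← smul_monomial, map_smul]
  exact smul_mem _ _ (subset_span ⟨a, rfl⟩)

lemma aeval_mem_adjoin_range {ι R S : Type*} [CommRing R] [CommRing S] [Algebra R S]
    (g : ι → S) (p : MvPolynomial ι R) : aeval g p ∈ Algebra.adjoin R (range g) := by
  rw [Algebra.adjoin_range_eq_range_aeval]
  exact AlgHom.mem_range_self _ p

section Generators

variable {ι R : Type*} [Fintype ι] [CommRing R] {w : ι → ℕ} {e : ι → ℕ}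
  {g : ι → MvPolynomial ι R}

lemma hasLeadingMonomial_aeval_monomial_mul_prod
    (hg : ∀ v, HasLeadingMonomial w (g v) (.single v (e v))) (a : ι →₀ ℕ) (d : ι → ℕ) :
    HasLeadingMonomial w (aeval g (monomial a (1 : R)) * ∏ v, X v ^ d v)
      (∑ v, .single v (e v * a v + d v)) := by
  rw [aeval_monomial, map_one, one_mul, Finsupp.prod_fintype _ _ fun _ => pow_zero _,
    ← Finset.prod_mul_distrib]
  refine HasLeadingMonomial.prod fun v _ => ?_
  convert ((hg v).pow (a v)).mul ((hasLeadingMonomial_X v).pow (d v)) using 1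
  simp [Finsupp.smul_single, Finsupp.single_add, mul_comm]

lemma bijective_sum_single_mul_add (he : ∀ v, 0 < e v) :
    Bijective fun x : (ι →₀ ℕ) × {d : ι → ℕ // ∀ v, d v < e v} =>
      ∑ v, Finsupp.single v (e v * x.1 v + x.2.1 v) := by
  have happly : ∀ (f : ι → ℕ) u, (∑ v, Finsupp.single v (f v)) u = f u := fun f u => by
    classical simp [Finsupp.finsetSum_apply, Finsupp.single_apply]
  refine ⟨?_, fun c => ?_⟩
  · rintro ⟨a, d, hd⟩ ⟨a', d', hd'⟩ h
    have h' := fun u => congrArg (· u) h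
    simp only [happly] at h'
    have hdiv : ∀ u, a u = a' u := fun u => by
      have := congrArg (· / e u) (h' u)
      simpa [Nat.mul_add_div (he u), Nat.div_eq_of_lt (hd u), Nat.div_eq_of_lt (hd' u)] using this
    have hmod : d = d' := by
      funext u
      have := congrArg (· % e u) (h' u)
      simpa [Nat.mul_add_mod, Nat.mod_eq_of_lt (hd u), Nat.mod_eq_of_lt (hd' u)] using this
    exact Prod.ext (Finsupp.ext hdiv) (Subtype.ext hmod)
  · refine ⟨(Finsupp.equivFunOnFinite.symm fun v => c v / e v,
      ⟨fun v => c v % e v, fun v => Nat.mod_lt _ (he v)⟩), Finsupp.ext fun u => ?_⟩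
    simp [Nat.div_add_mod]

variable (hg : ∀ v, HasLeadingMonomial w (g v) (.single v (e v))) (he : ∀ v, 0 < e v)
include hg he

lemma linearIndependent_aeval_monomial_mul_prod :
    LinearIndependent R fun x : (ι →₀ ℕ) × {d : ι → ℕ // ∀ v, d v < e v} =>
      aeval g (monomial x.1 (1 : R)) * ∏ v, X v ^ x.2.1 v :=
  linearIndependent_of_hasLeadingMonomial (bijective_sum_single_mul_add he).1
    fun x => hasLeadingMonomial_aeval_monomial_mul_prod hg x.1 x.2.1

lemma span_aeval_monomial_mul_prod :
    span R (range fun x : (ι →₀ ℕ) × {d : ι → ℕ // ∀ v, d v < e v} =>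
      aeval g (monomial x.1 (1 : R)) * ∏ v, X v ^ x.2.1 v) = ⊤ :=
  span_eq_top_of_hasLeadingMonomial (bijective_sum_single_mul_add he).2
    fun x => hasLeadingMonomial_aeval_monomial_mul_prod hg x.1 x.2.1

theorem algebraicIndependent_of_hasLeadingMonomial : AlgebraicIndependent R g := by
  have hli : LinearIndependent R fun a : ι →₀ ℕ => aeval g (monomial a (1 : R)) := by
    have := (linearIndependent_aeval_monomial_mul_prod hg he).comp
      (fun a => (a, ⟨0, he⟩)) fun a b h => congrArg Prod.fst h
    simpa only [comp_def, Pi.zero_apply, pow_zero, Finset.prod_const_one, mul_one] using this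
  have hconstr : (aeval g).toLinearMap =
      (basisMonomials ι R).constr R fun a => aeval g (monomial a (1 : R)) :=
    (basisMonomials ι R).ext fun a => by rw [Module.Basis.constr_basis, coe_basisMonomials]; rfl
  have := (basisMonomials ι R).injective_constr_of_linearIndependent (R₂ := R) hli
  rwa [← hconstr] at this

lemma linearIndependent_adjoin_prod_X_pow :
    LinearIndependent (Algebra.adjoin R (range g))
      fun d : {d : ι → ℕ // ∀ v, d v < e v} => ∏ v, (X v : MvPolynomial ι R) ^ d.1 v :=
  linearIndependent_of_linearIndependent_mul (adjoin_range_subset_span_aeval_monomial g)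
      (linearIndependent_aeval_monomial_mul_prod hg he)

lemma span_adjoin_prod_X_pow :
    span (Algebra.adjoin R (range g))
      (range fun d : {d : ι → ℕ // ∀ v, d v < e v} => ∏ v, (X v : MvPolynomial ι R) ^ d.1 v) = ⊤ :=
  span_eq_top_of_span_mul_eq_top (P := fun a => aeval g (monomial a (1 : R)))
    (fun _ => aeval_mem_adjoin_range g _) (span_aeval_monomial_mul_prod hg he)

def basisAdjoinOfHasLeadingMonomial :
    Module.Basis {d : ι → ℕ // ∀ v, d v < e v} (Algebra.adjoin R (range g)) (MvPolynomial ι R) :=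
  .mk (linearIndependent_adjoin_prod_X_pow hg he) (span_adjoin_prod_X_pow hg he).ge

lemma basisAdjoinOfHasLeadingMonomial_apply (d : {d : ι → ℕ // ∀ v, d v < e v}) :
    basisAdjoinOfHasLeadingMonomial hg he d = ∏ v, X v ^ d.1 v :=
  Module.Basis.mk_apply ..

end Generators

end MvPolynomial

section KleinFour

variable {F : Type} [Field F] {m : ℕ}

def yWeight (m : ℕ) : Fin m ⊕ Fin m → ℕ := Sum.elim 0 1

def hsopExponent (m : ℕ) : Fin m ⊕ Fin m → ℕ :=
  Sum.elim 1 fun i => if (i : ℕ) + 1 ≤ m / 2 then 2 else 4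

lemma hsopExponent_pos (v : Fin m ⊕ Fin m) : 0 < hsopExponent m v := by
  rcases v with i | i
  · exact Nat.one_pos
  · dsimp only [hsopExponent, Sum.elim_inr]; split_ifs <;> norm_num

variable (F m) in
def hsopGen (lam : F) : Fin m ⊕ Fin m → MvPolynomial (Fin m ⊕ Fin m) F :=
  Sum.elim (fun i => xv F m ((i : ℕ) + 1))
    fun i => if (i : ℕ) + 1 ≤ m / 2 then Nv F m lam ((i : ℕ) + 1) else normYv F m lam ((i : ℕ) + 1)

lemma xv_succ (i : Fin m) : xv F m ((i : ℕ) + 1) = X (Sum.inl i) := by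
  rw [xv, dif_pos ⟨Nat.le_add_left 1 i, i.isLt⟩]
  rfl

lemma yv_succ (i : Fin m) : yv F m ((i : ℕ) + 1) = X (Sum.inr i) := by
  rw [yv, dif_pos ⟨Nat.le_add_left 1 i, i.isLt⟩]
  rfl

lemma xv_mem_weightedHomogeneousSubmodule (i : ℕ) :
    xv F m i ∈ weightedHomogeneousSubmodule F (yWeight m) 0 := by
  rw [xv]; split
  · exact isWeightedHomogeneous_X F (yWeight m) _
  · exact zero_mem _

lemma yv_mem_weightedHomogeneousSubmodule (i : ℕ) :
    yv F m i ∈ weightedHomogeneousSubmodule F (yWeight m) 1 := by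
  rw [yv]; split
  · exact isWeightedHomogeneous_X F (yWeight m) _
  · exact zero_mem _

lemma uv_mem_weightedHomogeneousSubmodule (a b : ℕ) :
    uv F m a b ∈ weightedHomogeneousSubmodule F (yWeight m) 1 := by
  have hmul := weightedHomogeneousSubmodule_mul (R := F) (yWeight m) 0 1
  rw [zero_add] at hmul
  exact add_mem (hmul (mul_mem_mul (xv_mem_weightedHomogeneousSubmodule a)
      (yv_mem_weightedHomogeneousSubmodule b)))
    (hmul (mul_mem_mul (xv_mem_weightedHomogeneousSubmodule b)
      (yv_mem_weightedHomogeneousSubmodule a)))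

lemma Nv_sub_sq_mem_weightedHomogeneousSubmodule (lam : F) (i : ℕ) :
    Nv F m lam i - yv F m i ^ 2 ∈ weightedHomogeneousSubmodule F (yWeight m) 1 := by
  have hmul := weightedHomogeneousSubmodule_mul (R := F) (yWeight m) 0 1
  rw [zero_add] at hmul
  have hsplit : Nv F m lam i - yv F m i ^ 2 = xv F m i * yv F m i
      + (lam ^ 2 + lam) • ∑ j ∈ Finset.Icc 1 i, uv F m (i - j + 1) (i + j)
      + ∑ j ∈ Finset.Icc 1 (i - 1), (uv F m (i - j) (i + j) + uv F m (i - j) (i + j - 1)) := by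
    rw [Nv, nv, smul_eq_C_mul]; ring
  rw [hsplit]
  refine add_mem (add_mem ?_ (smul_mem _ _ (sum_mem fun j _ => ?_))) (sum_mem fun j _ => ?_)
  · exact hmul (mul_mem_mul (xv_mem_weightedHomogeneousSubmodule i)
      (yv_mem_weightedHomogeneousSubmodule i))
  · exact uv_mem_weightedHomogeneousSubmodule _ _
  · exact add_mem (uv_mem_weightedHomogeneousSubmodule _ _)
      (uv_mem_weightedHomogeneousSubmodule _ _)

lemma weight_yWeight_single_inr (i : Fin m) (k : ℕ) :
    weight (yWeight m) (Finsupp.single (Sum.inr i) k) = k := by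
  simp [Finsupp.weight_single, yWeight]

lemma hasLeadingMonomial_Nv (lam : F) (i : Fin m) :
    HasLeadingMonomial (yWeight m) (Nv F m lam ((i : ℕ) + 1)) (Finsupp.single (Sum.inr i) 2) := by
  have hlow := (Nv_sub_sq_mem_weightedHomogeneousSubmodule (m := m) lam ((i : ℕ) + 1)).mem_weightLT
    (n := weight (yWeight m) (Finsupp.single (Sum.inr i) 2))
    (by rw [weight_yWeight_single_inr]; norm_num)
  have := (hasLeadingMonomial_X_pow (Sum.inr i) 2).add_of_mem_weightLT hlow
  rwa [yv_succ, add_sub_cancel] at this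

lemma hasLeadingMonomial_normYv (lam : F) (i : Fin m) :
    HasLeadingMonomial (yWeight m) (normYv F m lam ((i : ℕ) + 1))
      (Finsupp.single (Sum.inr i) 4) := by
  have hy : HasLeadingMonomial (yWeight m) (X (Sum.inr i) : MvPolynomial (Fin m ⊕ Fin m) F)
      (Finsupp.single (Sum.inr i) 1) := hasLeadingMonomial_X _
  -- each factor of `N_G(y_{i+1})` is `y_{i+1}` plus a form of weight `0`
  have hfactor : ∀ p ∈ weightedHomogeneousSubmodule F (yWeight m) 0,
      HasLeadingMonomial (yWeight m) (X (Sum.inr i) + p) (Finsupp.single (Sum.inr i) 1) :=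
    fun p hp => hy.add_of_mem_weightLT
      (IsWeightedHomogeneous.mem_weightLT hp (by rw [weight_yWeight_single_inr]; norm_num))
  have hx := xv_mem_weightedHomogeneousSubmodule (F := F) (m := m)
  have hlin : ∀ c : F, C c * xv F m ((i : ℕ) + 1) + xv F m ((i : ℕ) + 1 - 1)
      ∈ weightedHomogeneousSubmodule F (yWeight m) 0 := fun c => by
    rw [← smul_eq_C_mul]
    exact add_mem (smul_mem _ _ (hx _)) (hx _)
  have := ((hy.mul (hfactor _ (hx ((i : ℕ) + 1)))).mul (hfactor _ (hlin lam))).mul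
    (hfactor _ (hlin (lam + 1)))
  rw [normYv, yv_succ]
  convert this using 1
  · simp only [add_assoc]
  · simp only [← Finsupp.single_add]

lemma hasLeadingMonomial_hsopGen (lam : F) (v : Fin m ⊕ Fin m) :
    HasLeadingMonomial (yWeight m) (hsopGen F m lam v) (Finsupp.single v (hsopExponent m v)) := by
  rcases v with i | i
  · rw [hsopGen, Sum.elim_inl, xv_succ]
    exact hasLeadingMonomial_X _
  · simp only [hsopGen, hsopExponent, Sum.elim_inr]
    split_ifs
    · exact hasLeadingMonomial_Nv lam i
    · exact hasLeadingMonomial_normYv lam i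

variable (m) in
def remainderEquiv : {d : Fin m ⊕ Fin m → ℕ // ∀ v, d v < hsopExponent m v} ≃
    {d : Fin m → ℕ // ∀ i : Fin m, d i ≤ if (i : ℕ) + 1 ≤ m / 2 then 1 else 3} where
  toFun d := ⟨fun i => d.1 (Sum.inr i), fun i => by
    have := d.2 (Sum.inr i)
    simp only [hsopExponent, Sum.elim_inr] at this
    show d.1 (Sum.inr i) ≤ _
    split_ifs at this ⊢ <;> omega⟩
  invFun d := ⟨Sum.elim 0 d.1, by
    rintro (i | i)
    · exact Nat.one_pos
    · have := d.2 i
      simp only [hsopExponent, Sum.elim_inr]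
      split_ifs at this ⊢ <;> omega⟩
  left_inv d := by
    ext (i | i)
    · have := d.2 (Sum.inl i)
      simp only [hsopExponent, Sum.elim_inl, Pi.one_apply, Nat.lt_one_iff] at this
      exact this.symm
    · rfl
  right_inv _ := rfl

end KleinFour

theorem stmt_4_general (F : Type) [Field F] (m : ℕ) (lam : F) :
    AlgebraicIndependent F
      (Sum.elim (fun i : Fin m => xv F m ((i : ℕ) + 1))
        (fun i : Fin m => if (i : ℕ) + 1 ≤ m / 2 then Nv F m lam ((i : ℕ) + 1)
          else normYv F m lam ((i : ℕ) + 1))) ∧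
    ∃ b : Module.Basis {d : Fin m → ℕ // ∀ i : Fin m, d i ≤ if (i : ℕ) + 1 ≤ m / 2 then 1 else 3}
        ↥(Algebra.adjoin F (Set.range (Sum.elim (fun i : Fin m => xv F m ((i : ℕ) + 1))
          (fun i : Fin m => if (i : ℕ) + 1 ≤ m / 2 then Nv F m lam ((i : ℕ) + 1)
            else normYv F m lam ((i : ℕ) + 1)))))
        (MvPolynomial (Fin m ⊕ Fin m) F),
      ∀ d, (b d : MvPolynomial (Fin m ⊕ Fin m) F)
        = ∏ i : Fin m, yv F m ((i : ℕ) + 1) ^ (d.1 i) := by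
  have hg := hasLeadingMonomial_hsopGen (F := F) (m := m) lam
  set b := basisAdjoinOfHasLeadingMonomial hg hsopExponent_pos
  refine ⟨algebraicIndependent_of_hasLeadingMonomial hg hsopExponent_pos,
    b.reindex (remainderEquiv m), fun d => (b.reindex_apply (remainderEquiv m) d).trans ?_⟩
  rw [basisAdjoinOfHasLeadingMonomial_apply, Fintype.prod_sum_type]
  have hinl : ∀ i, ((remainderEquiv m).symm d).1 (Sum.inl i) = 0 := fun _ => rfl
  simp only [hinl, pow_zero, Finset.prod_const_one, one_mul, yv_succ]
  rfl

theorem stmt_4 (F : Type) [Field F] [CharP F 2] (m : ℕ) (hm : 2 ≤ m) (lam : F)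
    (σ1 σ2 : MvPolynomial (Fin m ⊕ Fin m) F ≃ₐ[F] MvPolynomial (Fin m ⊕ Fin m) F)
    (hσ1x : ∀ i, σ1 (xv F m i) = xv F m i)
    (hσ2x : ∀ i, σ2 (xv F m i) = xv F m i)
    (hσ1y : ∀ i, 1 ≤ i → i ≤ m → σ1 (yv F m i) = yv F m i + xv F m i)
    (hσ2y1 : σ2 (yv F m 1) = yv F m 1 + C lam * xv F m 1)
    (hσ2y : ∀ i, 2 ≤ i → i ≤ m → σ2 (yv F m i) = yv F m i + C lam * xv F m i + xv F m (i - 1)) :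
    AlgebraicIndependent F
      (Sum.elim (fun i : Fin m => xv F m ((i : ℕ) + 1))
        (fun i : Fin m => if (i : ℕ) + 1 ≤ m / 2 then Nv F m lam ((i : ℕ) + 1)
          else normYv F m lam ((i : ℕ) + 1))) ∧
    ∃ b : Module.Basis {d : Fin m → ℕ // ∀ i : Fin m, d i ≤ if (i : ℕ) + 1 ≤ m / 2 then 1 else 3}
        ↥(Algebra.adjoin F (Set.range (Sum.elim (fun i : Fin m => xv F m ((i : ℕ) + 1))
          (fun i : Fin m => if (i : ℕ) + 1 ≤ m / 2 then Nv F m lam ((i : ℕ) + 1)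
            else normYv F m lam ((i : ℕ) + 1)))))
        (MvPolynomial (Fin m ⊕ Fin m) F),
      ∀ d, (b d : MvPolynomial (Fin m ⊕ Fin m) F)
        = ∏ i : Fin m, yv F m ((i : ℕ) + 1) ^ (d.1 i) :=
  stmt_4_general F m lam
end
end

section
/- If λ ∈ F ∖ {0,1} and m > 3, then in the localization S[x_1^{-1}] of S at the powers of x_1, the set of elements of the form f/x_1^k with f ∈ S^G and k ≥ 0 equals the F-subalgebra of S[x_1^{-1}] generated by x_1, …, x_m, N_1, N_2, t_3, …, t_m together with x_1^{-1}; i.e. S^G[x_1^{-1}] = F[x_1,…,x_m,N_1,N_2,t_3,…,t_m][x_1^{-1}]. -/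
/-!
STATEMENT 7: For the representation V_{m,λ} of the Klein four group G = ⟨σ1,σ2⟩ over a
field F of characteristic 2, if λ ∈ F ∖ {0,1} and m > 3 then, in the localization
S[x_1^{-1}] (= Localization.Away x_1), the set of elements of the form f/x_1^k with
f ∈ S^G and k ≥ 0 equals the F-subalgebra generated by the images of
x_1,…,x_m, N_1, N_2, t_3,…,t_m together with x_1^{-1} (the unique element z with
z·x_1 = 1).
-/

open MvPolynomial

noncomputable section

set_option linter.unusedSectionVars false
section Aux
variable {F : Type} [Field F] [CharP F 2] {m : ℕ}

lemma two_S : (2 : MvPolynomial (Fin m ⊕ Fin m) F) = 0 := CharTwo.two_eq_zero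

lemma Nv1_eq (lam : F) : Nv F m lam 1 = nv F m 1 + C (lam ^ 2 + lam) * uv F m 1 2 := by
  simp [Nv]

lemma Nv2_eq (lam : F) : Nv F m lam 2
    = nv F m 2 + C (lam ^ 2 + lam) * (uv F m 2 3 + uv F m 1 4)
      + (uv F m 1 3 + uv F m 1 2) := by
  have h1 : Finset.Icc 1 2 = ({1, 2} : Finset ℕ) := by decide
  have h2 : Finset.Icc 1 1 = ({1} : Finset ℕ) := by decide
  simp [Nv, h1, h2]

variable (lam : F)
  (σ1 σ2 : MvPolynomial (Fin m ⊕ Fin m) F ≃ₐ[F] MvPolynomial (Fin m ⊕ Fin m) F)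
  (hσ1x : ∀ i, σ1 (xv F m i) = xv F m i)
  (hσ2x : ∀ i, σ2 (xv F m i) = xv F m i)
  (hσ1y : ∀ i, 1 ≤ i → i ≤ m → σ1 (yv F m i) = yv F m i + xv F m i)
  (hσ2y1 : σ2 (yv F m 1) = yv F m 1 + C lam * xv F m 1)
  (hσ2y : ∀ i, 2 ≤ i → i ≤ m → σ2 (yv F m i) = yv F m i + C lam * xv F m i + xv F m (i - 1))

lemma sigC (r : F) : σ1 (C r) = C r := by
  have := σ1.commutes r; simpa [algebraMap_eq] using this

include hσ1x hσ1y in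
lemma sig1_u (a b : ℕ) (ha1 : 1 ≤ a) (ham : a ≤ m) (hb1 : 1 ≤ b) (hbm : b ≤ m) :
    σ1 (uv F m a b) = uv F m a b := by
  simp only [uv, map_add, map_mul, hσ1x, hσ1y a ha1 ham, hσ1y b hb1 hbm]
  linear_combination (xv F m a * xv F m b) * (two_S (F := F) (m := m))

include hσ2x hσ2y1 hσ2y in
lemma sig2_u1b (b : ℕ) (hb1 : 2 ≤ b) (hbm : b ≤ m) :
    σ2 (uv F m 1 b) = uv F m 1 b + xv F m 1 * xv F m (b - 1) := by
  simp only [uv, map_add, map_mul, hσ2x, hσ2y1, hσ2y b hb1 hbm]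
  linear_combination (C lam * xv F m 1 * xv F m b) * (two_S (F := F) (m := m))

include hσ2x hσ2y in
lemma sig2_uab (a b : ℕ) (ha1 : 2 ≤ a) (ham : a ≤ m) (hb1 : 2 ≤ b) (hbm : b ≤ m) :
    σ2 (uv F m a b) = uv F m a b + xv F m a * xv F m (b - 1) + xv F m b * xv F m (a - 1) := by
  simp only [uv, map_add, map_mul, hσ2x, hσ2y a ha1 ham, hσ2y b hb1 hbm]
  linear_combination (C lam * xv F m a * xv F m b) * (two_S (F := F) (m := m))

include hσ1x hσ1y in
lemma sig1_n (i : ℕ) (hi1 : 1 ≤ i) (him : i ≤ m) : σ1 (nv F m i) = nv F m i := by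
  simp only [nv, map_add, map_mul, map_pow, hσ1x, hσ1y i hi1 him]
  linear_combination (xv F m i * yv F m i + xv F m i ^ 2) * (two_S (F := F) (m := m))

include hσ2x hσ2y1 in
lemma sig2_n1 : σ2 (nv F m 1) = nv F m 1 + (C lam ^ 2 + C lam) * xv F m 1 ^ 2 := by
  simp only [nv, map_add, map_mul, map_pow, hσ2x, hσ2y1]
  linear_combination (C lam * xv F m 1 * yv F m 1) * (two_S (F := F) (m := m))

include hσ2x hσ2y in
lemma sig2_n (i : ℕ) (hi1 : 2 ≤ i) (him : i ≤ m) :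
    σ2 (nv F m i) = nv F m i + (C lam ^ 2 + C lam) * xv F m i ^ 2
      + xv F m (i - 1) ^ 2 + xv F m i * xv F m (i - 1) := by
  simp only [nv, map_add, map_mul, map_pow, hσ2x, hσ2y i hi1 him]
  linear_combination (C lam * xv F m i * yv F m i + xv F m (i-1) * yv F m i
    + C lam * xv F m i * xv F m (i-1)) * (two_S (F := F) (m := m))

include hσ1x hσ1y in
lemma sig1_t (j : ℕ) (hj1 : 2 ≤ j) (hjm : j ≤ m) (hm : 2 ≤ m) :
    σ1 (tv F m j) = tv F m j := by
  simp only [tv, map_add, map_mul, hσ1x,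
    sig1_u σ1 hσ1x hσ1y 1 2 (by omega) (by omega) (by omega) (by omega),
    sig1_u σ1 hσ1x hσ1y 1 j (by omega) (by omega) (by omega) hjm]

include hσ2x hσ2y1 hσ2y in
lemma sig2_t (j : ℕ) (hj1 : 2 ≤ j) (hjm : j ≤ m) (hm : 2 ≤ m) :
    σ2 (tv F m j) = tv F m j := by
  simp only [tv, map_add, map_mul, hσ2x,
    sig2_u1b lam σ2 hσ2x hσ2y1 hσ2y 2 (by omega) (by omega),
    sig2_u1b lam σ2 hσ2x hσ2y1 hσ2y j hj1 hjm]
  linear_combination (xv F m 1 ^ 2 * xv F m (j-1)) * (two_S (F := F) (m := m))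

include hσ1x hσ1y in
lemma sig1_N1 (hm : 2 ≤ m) : σ1 (Nv F m lam 1) = Nv F m lam 1 := by
  rw [Nv1_eq]
  simp only [map_add, map_mul, sigC σ1,
    sig1_n σ1 hσ1x hσ1y 1 (by omega) (by omega),
    sig1_u σ1 hσ1x hσ1y 1 2 (by omega) (by omega) (by omega) (by omega)]

include hσ2x hσ2y1 hσ2y in
lemma sig2_N1 (hm : 2 ≤ m) : σ2 (Nv F m lam 1) = Nv F m lam 1 := by
  rw [Nv1_eq]
  simp only [map_add, map_mul, map_pow, C_add, C_pow, sigC σ2,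
    sig2_n1 lam σ2 hσ2x hσ2y1,
    sig2_u1b lam σ2 hσ2x hσ2y1 hσ2y 2 (by omega) (by omega)]
  linear_combination ((C lam ^ 2 + C lam) * xv F m 1 ^ 2) * (two_S (F := F) (m := m))

include hσ1x hσ1y in
lemma sig1_N2 (hm : 4 ≤ m) : σ1 (Nv F m lam 2) = Nv F m lam 2 := by
  rw [Nv2_eq]
  simp only [map_add, map_mul, sigC σ1,
    sig1_n σ1 hσ1x hσ1y 2 (by omega) (by omega),
    sig1_u σ1 hσ1x hσ1y 2 3 (by omega) (by omega) (by omega) (by omega),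
    sig1_u σ1 hσ1x hσ1y 1 4 (by omega) (by omega) (by omega) (by omega),
    sig1_u σ1 hσ1x hσ1y 1 3 (by omega) (by omega) (by omega) (by omega),
    sig1_u σ1 hσ1x hσ1y 1 2 (by omega) (by omega) (by omega) (by omega)]

include hσ2x hσ2y1 hσ2y in
lemma sig2_N2 (hm : 4 ≤ m) : σ2 (Nv F m lam 2) = Nv F m lam 2 := by
  rw [Nv2_eq]
  simp only [map_add, map_mul, map_pow, C_add, C_pow, sigC σ2,
    sig2_n lam σ2 hσ2x hσ2y 2 (by omega) (by omega),
    sig2_uab lam σ2 hσ2x hσ2y 2 3 (by omega) (by omega) (by omega) (by omega),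
    sig2_u1b lam σ2 hσ2x hσ2y1 hσ2y 4 (by omega) (by omega),
    sig2_u1b lam σ2 hσ2x hσ2y1 hσ2y 3 (by omega) (by omega),
    sig2_u1b lam σ2 hσ2x hσ2y1 hσ2y 2 (by omega) (by omega)]
  linear_combination ((C lam ^ 2 + C lam) * (xv F m 2 ^ 2 + xv F m 1 * xv F m 3)
    + xv F m 1 ^ 2 + xv F m 1 * xv F m 2) * (two_S (F := F) (m := m))

end Aux
section Key
variable {F : Type} [Field F] [CharP F 2] {m : ℕ} (lam : F)

lemma keyI (hm : 4 ≤ m) :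
    uv F m 1 2 ^ 2 + xv F m 1 ^ 2 * uv F m 1 2
      = xv F m 1 ^ 2 * Nv F m lam 2 + xv F m 2 ^ 2 * Nv F m lam 1
        + C (lam ^ 2 + lam) * (xv F m 2 * tv F m 3) + C (lam ^ 2 + lam) * (xv F m 1 * tv F m 4)
        + xv F m 1 * tv F m 3 := by
  rw [Nv1_eq, Nv2_eq]
  simp only [tv, uv, nv, C_add, C_pow, show (3:ℕ)-1 = 2 from rfl, show (4:ℕ)-1 = 3 from rfl]
  linear_combination (- xv F m 2 ^ 3*yv F m 1*C lam - xv F m 2 ^ 3*yv F m 1*C lam ^ 2 + xv F m 1*xv F m 2*yv F m 1*yv F m 2 - xv F m 1*xv F m 2*xv F m 3*yv F m 1*C lam - xv F m 1*xv F m 2*xv F m 3*yv F m 1*C lam ^ 2 - xv F m 1*xv F m 2 ^ 2*yv F m 2*C lam - xv F m 1*xv F m 2 ^ 2*yv F m 2*C lam ^ 2 - xv F m 1*xv F m 2 ^ 2*yv F m 1 - xv F m 1 ^ 2*xv F m 4*yv F m 1*C lam - xv F m 1 ^ 2*xv F m 4*yv F m 1*C lam ^ 2 - xv F m 1 ^ 2*xv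 F m 3*yv F m 2*C lam - xv F m 1 ^ 2*xv F m 3*yv F m 2*C lam ^ 2 - xv F m 1 ^ 2*xv F m 3*yv F m 1 - xv F m 1 ^ 2*xv F m 2*yv F m 3*C lam - xv F m 1 ^ 2*xv F m 2*yv F m 3*C lam ^ 2 - xv F m 1 ^ 2*xv F m 2*yv F m 2 - xv F m 1 ^ 3*yv F m 4*C lam - xv F m 1 ^ 3*yv F m 4*C lam ^ 2 - xv F m 1 ^ 3*yv F m 3) * (two_S (F := F) (m := m))
end Key

set_option maxHeartbeats 1000000
set_option synthInstance.maxHeartbeats 400000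
section Loc
variable {F : Type} [Field F] [CharP F 2] {m : ℕ} (lam : F)

abbrev LL (F : Type) [Field F] (m : ℕ) := Localization.Away (xv F m 1)
def ph (F : Type) [Field F] (m : ℕ) : MvPolynomial (Fin m ⊕ Fin m) F →+* LL F m :=
  algebraMap _ _
def iX (F : Type) [Field F] (m : ℕ) : LL F m := IsLocalization.Away.invSelf (xv F m 1)

lemma hinvL : ph F m (xv F m 1) * iX F m = 1 := IsLocalization.Away.mul_invSelf _

lemma twoL : (2 : LL F m) = 0 := by
  have h := congrArg (ph F m) (two_S (F := F) (m := m))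
  rw [map_ofNat] at h
  simpa using h

def wL (F : Type) [Field F] (m : ℕ) : LL F m := ph F m (yv F m 1) * iX F m
def qL (F : Type) [Field F] (m : ℕ) : LL F m := ph F m (uv F m 1 2) * iX F m ^ 2
def Th1 (F : Type) [Field F] (m : ℕ) (lam : F) : LL F m :=
  ph F m (Nv F m lam 1) * iX F m ^ 2
def Th2 (F : Type) [Field F] (m : ℕ) (lam : F) : LL F m :=
  ph F m (xv F m 1 ^ 2 * Nv F m lam 2 + xv F m 2 ^ 2 * Nv F m lam 1
    + C (lam ^ 2 + lam) * (xv F m 2 * tv F m 3) + C (lam ^ 2 + lam) * (xv F m 1 * tv F m 4)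
    + xv F m 1 * tv F m 3) * iX F m ^ 4

lemma relR1 : wL F m * wL F m
    = wL F m + Th1 F m lam + (ph F m (C lam) ^ 2 + ph F m (C lam)) * qL F m := by
  simp only [wL, qL, Th1, Nv1_eq, tv, uv, nv, C_add, C_pow, map_add, map_mul, map_pow]
  linear_combination (-iX F m * ph F m (yv F m 1) - 2 * iX F m * ph F m (C lam) * ph F m (yv F m 2) - 2 * iX F m * ph F m (C lam) ^ 2 * ph F m (yv F m 2)) * (hinvL (F := F) (m := m)) + (-iX F m * ph F m (yv F m 1) - iX F m * ph F m (C lam) * ph F m (yv F m 2) - iX F m * ph F m (C lam) ^ 2 * ph F m (yv F m 2) - iX F m ^ 2 * ph F m (C lam) * ph F m (xv F m 2) * ph F m (yv F m 1) - iX F m ^ 2 * ph F m (C lam) ^ 2 * ph F m (xv F m 2) * ph F m (yv F m 1)) * (twoL (F := F) (m := m))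

lemma relR2 : qL F m * qL F m = qL F m + Th2 F m lam := by
  simp only [wL, qL, Th2, Nv1_eq, Nv2_eq, tv, uv, nv, C_add, C_pow, map_add, map_mul, map_pow,
    show (3:ℕ)-1 = 2 from rfl, show (4:ℕ)-1 = 3 from rfl]
  linear_combination (-2 * iX F m * ph F m (yv F m 3) - 2 * iX F m * ph F m (yv F m 2) - 2 * iX F m * ph F m (C lam) * ph F m (yv F m 4) - 2 * iX F m * ph F m (C lam) ^ 2 * ph F m (yv F m 4) - 2 * iX F m ^ 2 * ph F m (xv F m 3) * ph F m (yv F m 1) - 2 * iX F m ^ 2 * ph F m (xv F m 2) * ph F m (yv F m 2) - iX F m ^ 2 * ph F m (xv F m 2) * ph F m (yv F m 1) - 2 * iX F m ^ 2 * ph F m (xv F m 1) * ph F m (yv F m 3) - iX F m ^ 2 * ph F m (xv F m 1) * ph F m (yv F m 2) - 2 * iX F m ^ 2 * ph F m (C lam) * ph F m (xv F m 4) * ph F m (yv F m 1) - 2 * iX F m ^ 2 * ph F m (C lam) * ph F m (xv F m 3) * ph F m (yv F m 2) - 2 * iX F m ^ 2 * ph F m (C lam) * ph F m (xv F m 2)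 * ph F m (yv F m 3) - 2 * iX F m ^ 2 * ph F m (C lam) * ph F m (xv F m 1) * ph F m (yv F m 4) - 2 * iX F m ^ 2 * ph F m (C lam) ^ 2 * ph F m (xv F m 4) * ph F m (yv F m 1) - 2 * iX F m ^ 2 * ph F m (C lam) ^ 2 * ph F m (xv F m 3) * ph F m (yv F m 2) - 2 * iX F m ^ 2 * ph F m (C lam) ^ 2 * ph F m (xv F m 2) * ph F m (yv F m 3) - 2 * iX F m ^ 2 * ph F m (C lam) ^ 2 * ph F m (xv F m 1) * ph F m (yv F m 4) + 2 * iX F m ^ 3 * ph F m (xv F m 2) * ph F m (yv F m 1) * ph F m (yv F m 2) - 2 * iX F m ^ 3 * ph F m (xv F m 2) ^ 2 * ph F m (yv F m 1) - 2 * iX F m ^ 3 * ph F m (xv F m 1) * ph F m (xv F m 3) * ph F m (yv F m 1) - 2 * iX F m ^ 3 * ph F m (xv F m 1) * ph F m (xv F m 2) * ph F m (yv F m 2) - iX F m ^ 3 * ph F m (xv F m 1) * ph F m (xv F m 2) * ph F m (yv F m 1) - 2 * iX F m ^ 3 * ph F m (xv F m 1) ^ 2 * ph F m (yv F m 3) -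 iX F m ^ 3 * ph F m (xv F m 1) ^ 2 * ph F m (yv F m 2) - 2 * iX F m ^ 3 * ph F m (C lam) * ph F m (xv F m 2) * ph F m (xv F m 3) * ph F m (yv F m 1) - 2 * iX F m ^ 3 * ph F m (C lam) * ph F m (xv F m 2) ^ 2 * ph F m (yv F m 2) - 2 * iX F m ^ 3 * ph F m (C lam) * ph F m (xv F m 1) * ph F m (xv F m 4) * ph F m (yv F m 1) - 2 * iX F m ^ 3 * ph F m (C lam) * ph F m (xv F m 1) * ph F m (xv F m 3) * ph F m (yv F m 2) - 2 * iX F m ^ 3 * ph F m (C lam) * ph F m (xv F m 1) * ph F m (xv F m 2) * ph F m (yv F m 3) - 2 * iX F m ^ 3 * ph F m (C lam) * ph F m (xv F m 1) ^ 2 * ph F m (yv F m 4) - 2 * iX F m ^ 3 * ph F m (C lam) ^ 2 * ph F m (xv F m 2) * ph F m (xv F m 3) * ph F m (yv F m 1) - 2 * iX F m ^ 3 * ph F m (C lam) ^ 2 * ph F m (xv F m 2) ^ 2 * ph F m (yv F m 2) - 2 * iX F m ^ 3 * ph F m (C lam) ^ 2 * ph F m (xv F m 1) * ph F m (xv F m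 4) * ph F m (yv F m 1) - 2 * iX F m ^ 3 * ph F m (C lam) ^ 2 * ph F m (xv F m 1) * ph F m (xv F m 3) * ph F m (yv F m 2) - 2 * iX F m ^ 3 * ph F m (C lam) ^ 2 * ph F m (xv F m 1) * ph F m (xv F m 2) * ph F m (yv F m 3) - 2 * iX F m ^ 3 * ph F m (C lam) ^ 2 * ph F m (xv F m 1) ^ 2 * ph F m (yv F m 4)) * (hinvL (F := F) (m := m)) + (-iX F m * ph F m (yv F m 3) - iX F m * ph F m (yv F m 2) - iX F m * ph F m (C lam) * ph F m (yv F m 4) - iX F m * ph F m (C lam) ^ 2 * ph F m (yv F m 4) - iX F m ^ 2 * ph F m (xv F m 3) * ph F m (yv F m 1) - iX F m ^ 2 * ph F m (xv F m 2) * ph F m (yv F m 2) - iX F m ^ 2 * ph F m (xv F m 2) * ph F m (yv F m 1) - iX F m ^ 2 * ph F m (C lam) * ph F m (xv F m 4) * ph F m (yv F m 1) - iX F m ^ 2 * ph F m (C lam) * ph F m (xv F m 3) * ph F m (yv F m 2) - iX F m ^ 2 * ph F m (C lam) * ph F m (xv F m 2) * ph F m (yv F m 3) - iX F m ^ 2 *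 ph F m (C lam) ^ 2 * ph F m (xv F m 4) * ph F m (yv F m 1) - iX F m ^ 2 * ph F m (C lam) ^ 2 * ph F m (xv F m 3) * ph F m (yv F m 2) - iX F m ^ 2 * ph F m (C lam) ^ 2 * ph F m (xv F m 2) * ph F m (yv F m 3) + iX F m ^ 3 * ph F m (xv F m 2) * ph F m (yv F m 1) * ph F m (yv F m 2) - iX F m ^ 3 * ph F m (xv F m 2) ^ 2 * ph F m (yv F m 1) - iX F m ^ 3 * ph F m (C lam) * ph F m (xv F m 2) * ph F m (xv F m 3) * ph F m (yv F m 1) - iX F m ^ 3 * ph F m (C lam) * ph F m (xv F m 2) ^ 2 * ph F m (yv F m 2) - iX F m ^ 3 * ph F m (C lam) ^ 2 * ph F m (xv F m 2) * ph F m (xv F m 3) * ph F m (yv F m 1) - iX F m ^ 3 * ph F m (C lam) ^ 2 * ph F m (xv F m 2) ^ 2 * ph F m (yv F m 2) - iX F m ^ 4 * ph F m (C lam) * ph F m (xv F m 2) ^ 3 * ph F m (yv F m 1) - iX F m ^ 4 * ph F m (C lam) ^ 2 * ph F m (xv F m 2) ^ 3 * ph F m (yv F m 1)) * (twoL (F :=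 F) (m := m))

lemma relY1 : ph F m (yv F m 1) = ph F m (xv F m 1) * wL F m := by
  simp only [wL]
  linear_combination (-ph F m (yv F m 1)) * (hinvL (F := F) (m := m)) + (0 : Localization.Away (xv F m 1)) * (twoL (F := F) (m := m))

lemma relY2 : ph F m (yv F m 2)
    = ph F m (xv F m 1) * qL F m + ph F m (xv F m 2) * wL F m := by
  simp only [wL, qL, uv, map_add, map_mul]
  linear_combination (-ph F m (yv F m 2) - iX F m * ph F m (xv F m 2) * ph F m (yv F m 1) - iX F m * ph F m (xv F m 1) * ph F m (yv F m 2)) * (hinvL (F := F) (m := m)) + (-iX F m * ph F m (xv F m 2) * ph F m (yv F m 1)) * (twoL (F := F) (m := m))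

lemma relYj (j : ℕ) : ph F m (yv F m j)
    = ph F m (tv F m j) * iX F m ^ 2 + ph F m (xv F m (j-1)) * qL F m
      + ph F m (xv F m j) * wL F m := by
  simp only [wL, qL, tv, uv, map_add, map_mul, map_pow]
  linear_combination (-ph F m (yv F m j) - 2 * iX F m * ph F m (xv F m (j-1)) * ph F m (yv F m 2) - iX F m * ph F m (xv F m j) * ph F m (yv F m 1) - iX F m * ph F m (xv F m 1) * ph F m (yv F m j)) * (hinvL (F := F) (m := m)) + (-iX F m * ph F m (xv F m (j-1)) * ph F m (yv F m 2) - iX F m * ph F m (xv F m j) * ph F m (yv F m 1) - iX F m ^ 2 * ph F m (xv F m 2) * ph F m (xv F m (j-1)) * ph F m (yv F m 1)) * (twoL (F := F) (m := m))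

end Loc
section Lift
variable {F : Type} [Field F] [CharP F 2] {m : ℕ}
  (σ : MvPolynomial (Fin m ⊕ Fin m) F ≃ₐ[F] MvPolynomial (Fin m ⊕ Fin m) F)
  (hx : σ (xv F m 1) = xv F m 1)

example : IsScalarTower F (MvPolynomial (Fin m ⊕ Fin m) F) (LL F m) := inferInstance
example (r : F) : algebraMap F (LL F m) r = ph F m (MvPolynomial.C r) := by
  rw [IsScalarTower.algebraMap_apply F (MvPolynomial (Fin m ⊕ Fin m) F) (LL F m)]
  rw [MvPolynomial.algebraMap_eq]; rfl

def liftSig : LL F m →+* LL F m :=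
  IsLocalization.Away.lift (g := (ph F m).comp (σ.toAlgHom.toRingHom)) (xv F m 1)
    (by
      have : ((ph F m).comp (σ.toAlgHom.toRingHom)) (xv F m 1) = ph F m (xv F m 1) := by
        simp [hx]
      rw [this]
      exact IsLocalization.Away.algebraMap_isUnit _)

lemma liftSig_ph (f : MvPolynomial (Fin m ⊕ Fin m) F) :
    liftSig σ hx (ph F m f) = ph F m (σ f) :=
  IsLocalization.Away.lift_eq _ _ _

lemma liftSig_iX : liftSig σ hx (iX F m) = iX F m := by
  have h1 : ph F m (xv F m 1) * liftSig σ hx (iX F m) = 1 := by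
    have h := congrArg (liftSig σ hx) (hinvL (F := F) (m := m))
    rw [map_mul, map_one, liftSig_ph σ hx, hx] at h
    exact h
  have h2 := hinvL (F := F) (m := m)
  calc liftSig σ hx (iX F m)
      = (ph F m (xv F m 1) * iX F m) * liftSig σ hx (iX F m) := by rw [h2, one_mul]
    _ = iX F m * (ph F m (xv F m 1) * liftSig σ hx (iX F m)) := by ring
    _ = iX F m := by rw [h1, mul_one]

end Lift
section Aux2
variable {F : Type} [Field F] [CharP F 2] {m : ℕ} (lam : F)
  (σ1 σ2 : MvPolynomial (Fin m ⊕ Fin m) F ≃ₐ[F] MvPolynomial (Fin m ⊕ Fin m) F)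
  (hσ1x : ∀ i, σ1 (xv F m i) = xv F m i)
  (hσ2x : ∀ i, σ2 (xv F m i) = xv F m i)
  (hσ1y : ∀ i, 1 ≤ i → i ≤ m → σ1 (yv F m i) = yv F m i + xv F m i)
  (hσ2y1 : σ2 (yv F m 1) = yv F m 1 + MvPolynomial.C lam * xv F m 1)
  (hσ2y : ∀ i, 2 ≤ i → i ≤ m → σ2 (yv F m i) = yv F m i + MvPolynomial.C lam * xv F m i + xv F m (i - 1))

lemma xv_X (k : Fin m) : xv F m ((k : ℕ) + 1) = X (Sum.inl k) := by
  have h : 1 ≤ (k:ℕ)+1 ∧ (k:ℕ)+1 ≤ m := ⟨by omega, by omega⟩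
  rw [xv, dif_pos h]
  exact congrArg X (congrArg Sum.inl (Fin.ext (by simp)))

lemma yv_X (k : Fin m) : yv F m ((k : ℕ) + 1) = X (Sum.inr k) := by
  have h : 1 ≤ (k:ℕ)+1 ∧ (k:ℕ)+1 ≤ m := ⟨by omega, by omega⟩
  rw [yv, dif_pos h]
  exact congrArg X (congrArg Sum.inr (Fin.ext (by simp)))

def bigP (F : Type) [Field F] (m : ℕ) (lam : F) : MvPolynomial (Fin m ⊕ Fin m) F :=
  xv F m 1 ^ 2 * Nv F m lam 2 + xv F m 2 ^ 2 * Nv F m lam 1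
    + C (lam ^ 2 + lam) * (xv F m 2 * tv F m 3) + C (lam ^ 2 + lam) * (xv F m 1 * tv F m 4)
    + xv F m 1 * tv F m 3

include hσ1x hσ1y in
lemma sig1_big (hm : 4 ≤ m) : σ1 (bigP F m lam) = bigP F m lam := by
  simp only [bigP, map_add, map_mul, map_pow, sigC σ1, hσ1x,
    sig1_N1 lam σ1 hσ1x hσ1y (by omega),
    sig1_N2 lam σ1 hσ1x hσ1y hm,
    sig1_t σ1 hσ1x hσ1y 3 (by omega) (by omega) (by omega),
    sig1_t σ1 hσ1x hσ1y 4 (by omega) (by omega) (by omega)]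

include hσ2x hσ2y1 hσ2y in
lemma sig2_big (hm : 4 ≤ m) : σ2 (bigP F m lam) = bigP F m lam := by
  simp only [bigP, map_add, map_mul, map_pow, sigC σ2, hσ2x,
    sig2_N1 lam σ2 hσ2x hσ2y1 hσ2y (by omega),
    sig2_N2 lam σ2 hσ2x hσ2y1 hσ2y hm,
    sig2_t lam σ2 hσ2x hσ2y1 hσ2y 3 (by omega) (by omega) (by omega),
    sig2_t lam σ2 hσ2x hσ2y1 hσ2y 4 (by omega) (by omega) (by omega)]

lemma Th2_eq : Th2 F m lam = ph F m (bigP F m lam) * iX F m ^ 4 := rfl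

end Aux2
section Mach
variable {F : Type} [Field F] [CharP F 2] {m : ℕ} (lam : F)
  (AD : Subalgebra F (LL F m)) (L1 L2 : LL F m →+* LL F m)

def GoodP (z : LL F m) : Prop := z ∈ AD ∧ L1 z = z ∧ L2 z = z

def MsP (z : LL F m) : Prop :=
  ∃ a b c d : LL F m, GoodP AD L1 L2 a ∧ GoodP AD L1 L2 b ∧ GoodP AD L1 L2 c ∧ GoodP AD L1 L2 d ∧
    z = a + b * wL F m + c * qL F m + d * (wL F m * qL F m)

variable {AD L1 L2}

lemma good_add {z1 z2 : LL F m} (h1 : GoodP AD L1 L2 z1) (h2 : GoodP AD L1 L2 z2) :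
    GoodP AD L1 L2 (z1 + z2) :=
  ⟨add_mem h1.1 h2.1, by rw [map_add, h1.2.1, h2.2.1], by rw [map_add, h1.2.2, h2.2.2]⟩

lemma good_mul {z1 z2 : LL F m} (h1 : GoodP AD L1 L2 z1) (h2 : GoodP AD L1 L2 z2) :
    GoodP AD L1 L2 (z1 * z2) :=
  ⟨mul_mem h1.1 h2.1, by rw [map_mul, h1.2.1, h2.2.1], by rw [map_mul, h1.2.2, h2.2.2]⟩

lemma good_zero : GoodP AD L1 L2 (0 : LL F m) := ⟨zero_mem _, map_zero _, map_zero _⟩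

lemma M_good {g : LL F m} (hg : GoodP AD L1 L2 g) : MsP AD L1 L2 g :=
  ⟨g, 0, 0, 0, hg, good_zero, good_zero, good_zero, by ring⟩

lemma M_add {z1 z2 : LL F m} (h1 : MsP AD L1 L2 z1) (h2 : MsP AD L1 L2 z2) :
    MsP AD L1 L2 (z1 + z2) := by
  obtain ⟨a1,b1,c1,d1,ha1,hb1,hc1,hd1,rfl⟩ := h1
  obtain ⟨a2,b2,c2,d2,ha2,hb2,hc2,hd2,rfl⟩ := h2
  exact ⟨a1+a2, b1+b2, c1+c2, d1+d2, good_add ha1 ha2, good_add hb1 hb2,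
    good_add hc1 hc2, good_add hd1 hd2, by ring⟩

lemma M_mulg {z : LL F m} (g : LL F m) (hz : MsP AD L1 L2 z) (hg : GoodP AD L1 L2 g) :
    MsP AD L1 L2 (z * g) := by
  obtain ⟨a,b,c,d,ha,hb,hc,hd,rfl⟩ := hz
  exact ⟨a*g, b*g, c*g, d*g, good_mul ha hg, good_mul hb hg, good_mul hc hg,
    good_mul hd hg, by ring⟩

lemma M_mulw (hTh1 : GoodP AD L1 L2 (Th1 F m lam))
    (hTh2 : GoodP AD L1 L2 (Th2 F m lam))
    (hcc : GoodP AD L1 L2 (ph F m (C lam) ^ 2 + ph F m (C lam)))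
    {z : LL F m} (hz : MsP AD L1 L2 z) : MsP AD L1 L2 (z * wL F m) := by
  obtain ⟨a,b,c,d,ha,hb,hc,hd,rfl⟩ := hz
  refine ⟨b * Th1 F m lam + d * ((ph F m (C lam) ^ 2 + ph F m (C lam)) * Th2 F m lam),
    a + b,
    b * (ph F m (C lam) ^ 2 + ph F m (C lam)) + d * Th1 F m lam
      + d * (ph F m (C lam) ^ 2 + ph F m (C lam)),
    c + d, ?_, ?_, ?_, ?_, ?_⟩
  · exact good_add (good_mul hb hTh1) (good_mul hd (good_mul hcc hTh2))
  · exact good_add ha hb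
  · exact good_add (good_add (good_mul hb hcc) (good_mul hd hTh1)) (good_mul hd hcc)
  · exact good_add hc hd
  · linear_combination (b + d * qL F m) * (relR1 (F := F) (m := m) lam)
      + (d * (ph F m (C lam) ^ 2 + ph F m (C lam))) * (relR2 (F := F) (m := m) lam)

lemma M_mulq (hTh2 : GoodP AD L1 L2 (Th2 F m lam))
    {z : LL F m} (hz : MsP AD L1 L2 z) : MsP AD L1 L2 (z * qL F m) := by
  obtain ⟨a,b,c,d,ha,hb,hc,hd,rfl⟩ := hz
  refine ⟨c * Th2 F m lam, d * Th2 F m lam, a + c, b + d, good_mul hc hTh2,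
    good_mul hd hTh2, good_add ha hc, good_add hb hd, ?_⟩
  linear_combination (c + d * wL F m) * (relR2 (F := F) (m := m) lam)

end Mach

set_option maxHeartbeats 2000000 in
theorem stmt_7 (F : Type) [Field F] [CharP F 2] (m : ℕ) (hm : 3 < m) (lam : F)
    (hlam0 : lam ≠ 0) (hlam1 : lam ≠ 1)
    (σ1 σ2 : MvPolynomial (Fin m ⊕ Fin m) F ≃ₐ[F] MvPolynomial (Fin m ⊕ Fin m) F)
    (hσ1x : ∀ i, σ1 (xv F m i) = xv F m i)
    (hσ2x : ∀ i, σ2 (xv F m i) = xv F m i)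
    (hσ1y : ∀ i, 1 ≤ i → i ≤ m → σ1 (yv F m i) = yv F m i + xv F m i)
    (hσ2y1 : σ2 (yv F m 1) = yv F m 1 + C lam * xv F m 1)
    (hσ2y : ∀ i, 2 ≤ i → i ≤ m → σ2 (yv F m i) = yv F m i + C lam * xv F m i + xv F m (i - 1)) :
    {z : Localization.Away (xv F m 1) | ∃ (f : MvPolynomial (Fin m ⊕ Fin m) F) (k : ℕ),
        σ1 f = f ∧ σ2 f = f ∧
        algebraMap (MvPolynomial (Fin m ⊕ Fin m) F) (Localization.Away (xv F m 1))
            (xv F m 1) ^ k * z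
          = algebraMap (MvPolynomial (Fin m ⊕ Fin m) F) (Localization.Away (xv F m 1)) f}
      = ↑(Algebra.adjoin F
          ((algebraMap (MvPolynomial (Fin m ⊕ Fin m) F) (Localization.Away (xv F m 1)) ''
              ((xv F m '' Set.Icc 1 m) ∪ {Nv F m lam 1, Nv F m lam 2} ∪
                (tv F m '' Set.Icc 3 m))) ∪
            {z : Localization.Away (xv F m 1) |
              z * algebraMap (MvPolynomial (Fin m ⊕ Fin m) F) (Localization.Away (xv F m 1))
                (xv F m 1) = 1})) := by

  have hm4 : 4 ≤ m := hm
  set G : Set (Localization.Away (xv F m 1)) :=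
      (algebraMap (MvPolynomial (Fin m ⊕ Fin m) F) (Localization.Away (xv F m 1)) ''
          ((xv F m '' Set.Icc 1 m) ∪ {Nv F m lam 1, Nv F m lam 2} ∪
            (tv F m '' Set.Icc 3 m))) ∪
        {z : Localization.Away (xv F m 1) |
          z * algebraMap (MvPolynomial (Fin m ⊕ Fin m) F) (Localization.Away (xv F m 1))
            (xv F m 1) = 1} with hGdef
  set AD : Subalgebra F (LL F m) := Algebra.adjoin F G with hADdef
  have hiX : ph F m (xv F m 1) * iX F m = 1 := hinvL
  -- basic memberships
  have hx_mem : ∀ i, 1 ≤ i → i ≤ m → ph F m (xv F m i) ∈ AD := by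
    intro i h1 h2
    exact Algebra.subset_adjoin (Or.inl ⟨xv F m i, Or.inl (Or.inl ⟨i, ⟨h1, h2⟩, rfl⟩), rfl⟩)
  have hN1_mem : ph F m (Nv F m lam 1) ∈ AD :=
    Algebra.subset_adjoin (Or.inl ⟨Nv F m lam 1, Or.inl (Or.inr (Or.inl rfl)), rfl⟩)
  have hN2_mem : ph F m (Nv F m lam 2) ∈ AD :=
    Algebra.subset_adjoin (Or.inl ⟨Nv F m lam 2, Or.inl (Or.inr (Or.inr rfl)), rfl⟩)
  have ht_mem : ∀ j, 3 ≤ j → j ≤ m → ph F m (tv F m j) ∈ AD := by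
    intro j h1 h2
    exact Algebra.subset_adjoin (Or.inl ⟨tv F m j, Or.inr ⟨j, ⟨h1, h2⟩, rfl⟩, rfl⟩)
  have hiX_mem : iX F m ∈ AD := by
    refine Algebra.subset_adjoin (Or.inr ?_)
    show iX F m * ph F m (xv F m 1) = 1
    rw [mul_comm]; exact hiX
  have hphC_mem : ∀ r : F, ph F m (C r) ∈ AD := by
    intro r
    have h : algebraMap F (LL F m) r = ph F m (C r) := by
      rw [IsScalarTower.algebraMap_apply F (MvPolynomial (Fin m ⊕ Fin m) F) (LL F m),
        algebraMap_eq]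
      rfl
    rw [← h]
    exact Subalgebra.algebraMap_mem _ r
  -- lifted automorphisms
  set L1 : LL F m →+* LL F m := liftSig σ1 (hσ1x 1) with hL1def
  set L2 : LL F m →+* LL F m := liftSig σ2 (hσ2x 1) with hL2def
  have hL1φ : ∀ f, L1 (ph F m f) = ph F m (σ1 f) := fun f => liftSig_ph σ1 (hσ1x 1) f
  have hL2φ : ∀ f, L2 (ph F m f) = ph F m (σ2 f) := fun f => liftSig_ph σ2 (hσ2x 1) f
  have hL1iX : L1 (iX F m) = iX F m := liftSig_iX σ1 (hσ1x 1)
  have hL2iX : L2 (iX F m) = iX F m := liftSig_iX σ2 (hσ2x 1)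
  -- Good elements
  have good_ph : ∀ f, ph F m f ∈ AD → σ1 f = f → σ2 f = f → GoodP AD L1 L2 (ph F m f) :=
    fun f h hf1 hf2 => ⟨h, by rw [hL1φ, hf1], by rw [hL2φ, hf2]⟩
  have good_phC : ∀ r : F, GoodP AD L1 L2 (ph F m (C r)) :=
    fun r => good_ph _ (hphC_mem r) (sigC σ1 r) (sigC σ2 r)
  have good_x : ∀ i, 1 ≤ i → i ≤ m → GoodP AD L1 L2 (ph F m (xv F m i)) :=
    fun i h1 h2 => good_ph _ (hx_mem i h1 h2) (hσ1x i) (hσ2x i)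
  have good_iX : GoodP AD L1 L2 (iX F m) := ⟨hiX_mem, hL1iX, hL2iX⟩
  have good_iX2 : GoodP AD L1 L2 (iX F m ^ 2) := by
    rw [sq]; exact good_mul good_iX good_iX
  have good_iX4 : GoodP AD L1 L2 (iX F m ^ 4) := by
    rw [show (4 : ℕ) = 2 + 2 from rfl, pow_add]; exact good_mul good_iX2 good_iX2
  have good_Th1 : GoodP AD L1 L2 (Th1 F m lam) := by
    refine good_mul (good_ph _ hN1_mem ?_ ?_) good_iX2
    · exact sig1_N1 lam σ1 hσ1x hσ1y (by omega)
    · exact sig2_N1 lam σ2 hσ2x hσ2y1 hσ2y (by omega)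
  have hbig_mem : ph F m (bigP F m lam) ∈ AD := by
    rw [bigP]
    simp only [map_add, map_mul, map_pow]
    exact add_mem (add_mem (add_mem (add_mem
      (mul_mem (pow_mem (hx_mem 1 (by omega) (by omega)) 2) hN2_mem)
      (mul_mem (pow_mem (hx_mem 2 (by omega) (by omega)) 2) hN1_mem))
      (mul_mem (add_mem (pow_mem (hphC_mem lam) 2) (hphC_mem lam))
        (mul_mem (hx_mem 2 (by omega) (by omega)) (ht_mem 3 (by omega) (by omega)))))
      (mul_mem (add_mem (pow_mem (hphC_mem lam) 2) (hphC_mem lam))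
        (mul_mem (hx_mem 1 (by omega) (by omega)) (ht_mem 4 (by omega) (by omega)))))
      (mul_mem (hx_mem 1 (by omega) (by omega)) (ht_mem 3 (by omega) (by omega)))
  have good_Th2 : GoodP AD L1 L2 (Th2 F m lam) := by
    rw [Th2_eq]
    refine good_mul (good_ph _ hbig_mem ?_ ?_) good_iX4
    · exact sig1_big lam σ1 hσ1x hσ1y hm4
    · exact sig2_big lam σ2 hσ2x hσ2y1 hσ2y hm4
  have good_cc : GoodP AD L1 L2 (ph F m (C lam) ^ 2 + ph F m (C lam)) := by
    refine good_add ?_ (good_phC lam)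
    rw [sq]; exact good_mul (good_phC lam) (good_phC lam)
  have good_s : ∀ j, 3 ≤ j → j ≤ m → GoodP AD L1 L2 (ph F m (tv F m j) * iX F m ^ 2) := by
    intro j h1 h2
    refine good_mul (good_ph _ (ht_mem j h1 h2) ?_ ?_) good_iX2
    · exact sig1_t σ1 hσ1x hσ1y j (by omega) h2 (by omega)
    · exact sig2_t lam σ2 hσ2x hσ2y1 hσ2y j (by omega) h2 (by omega)
  -- action on w and q
  have hL1w : L1 (wL F m) = wL F m + 1 := by
    simp only [wL]
    rw [map_mul, hL1φ, hL1iX, hσ1y 1 (by omega) (by omega), map_add]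
    linear_combination hiX
  have hL2w : L2 (wL F m) = wL F m + ph F m (C lam) := by
    simp only [wL]
    rw [map_mul, hL2φ, hL2iX, hσ2y1, map_add, map_mul]
    linear_combination (ph F m (C lam)) * hiX
  have hL1q : L1 (qL F m) = qL F m := by
    simp only [qL]
    rw [map_mul, map_pow, hL1φ, hL1iX,
      sig1_u σ1 hσ1x hσ1y 1 2 (by omega) (by omega) (by omega) (by omega)]
  have hL2q : L2 (qL F m) = qL F m + 1 := by
    simp only [qL]
    rw [map_mul, map_pow, hL2φ, hL2iX,
      sig2_u1b lam σ2 hσ2x hσ2y1 hσ2y 2 (by omega) (by omega)]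
    simp only [show (2:ℕ) - 1 = 1 from rfl, map_add, map_mul]
    linear_combination (ph F m (xv F m 1) * iX F m + 1) * hiX
  -- span lemma
  have span_all : ∀ f : MvPolynomial (Fin m ⊕ Fin m) F, MsP AD L1 L2 (ph F m f) := by
    intro f
    induction f using MvPolynomial.induction_on with
    | C r => exact M_good (good_phC r)
    | add p q hp hq => rw [map_add]; exact M_add hp hq
    | mul_X p n ih =>
      rw [map_mul]
      rcases n with k | k
      · rw [← xv_X k]
        exact M_mulg _ ih (good_x ((k : ℕ) + 1) (by omega) (by omega))
      · rw [← yv_X k]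
        have hkm : (k : ℕ) < m := k.isLt
        rcases Nat.lt_or_ge (k : ℕ) 1 with h0 | h1
        · rw [show (k : ℕ) + 1 = 1 by omega, relY1 (F := F) (m := m), ← mul_assoc]
          exact M_mulw lam good_Th1 good_Th2 good_cc
            (M_mulg _ ih (good_x 1 (by omega) (by omega)))
        · rcases Nat.lt_or_ge (k : ℕ) 2 with h2 | h2
          · rw [show (k : ℕ) + 1 = 2 by omega, relY2 (F := F) (m := m)]
            have he : ph F m p * (ph F m (xv F m 1) * qL F m + ph F m (xv F m 2) * wL F m)
                = (ph F m p * ph F m (xv F m 1)) * qL F m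
                  + (ph F m p * ph F m (xv F m 2)) * wL F m := by ring
            rw [he]
            exact M_add
              (M_mulq lam good_Th2 (M_mulg _ ih (good_x 1 (by omega) (by omega))))
              (M_mulw lam good_Th1 good_Th2 good_cc
                (M_mulg _ ih (good_x 2 (by omega) (by omega))))
          · rw [relYj (F := F) (m := m) ((k : ℕ) + 1)]
            have he : ph F m p * (ph F m (tv F m ((k:ℕ)+1)) * iX F m ^ 2
                  + ph F m (xv F m ((k:ℕ)+1-1)) * qL F m
                  + ph F m (xv F m ((k:ℕ)+1)) * wL F m)
                = ph F m p * (ph F m (tv F m ((k:ℕ)+1)) * iX F m ^ 2)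
                  + (ph F m p * ph F m (xv F m ((k:ℕ)+1-1))) * qL F m
                  + (ph F m p * ph F m (xv F m ((k:ℕ)+1))) * wL F m := by ring
            rw [he]
            refine M_add (M_add ?_ ?_) ?_
            · exact M_mulg _ ih (good_s ((k:ℕ)+1) (by omega) (by omega))
            · exact M_mulq lam good_Th2
                (M_mulg _ ih (good_x ((k:ℕ)+1-1) (by omega) (by omega)))
            · exact M_mulw lam good_Th1 good_Th2 good_cc
                (M_mulg _ ih (good_x ((k:ℕ)+1) (by omega) (by omega)))
  -- main: invariant elements land in AD
  have main : ∀ f : MvPolynomial (Fin m ⊕ Fin m) F, σ1 f = f → σ2 f = f →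
      ph F m f ∈ AD := by
    intro f hf1 hf2
    obtain ⟨a, b, c, d, ha, hb, hc, hd, hrep⟩ := span_all f
    have e1 : ph F m f = a + b * (wL F m + 1) + c * qL F m
        + d * ((wL F m + 1) * qL F m) := by
      have h := congrArg L1 hrep
      rw [hL1φ, hf1] at h
      rw [map_add, map_add, map_add, map_mul, map_mul, map_mul, map_mul] at h
      rw [ha.2.1, hb.2.1, hc.2.1, hd.2.1, hL1w, hL1q] at h
      exact h
    have hbd : b + d * qL F m = 0 := by linear_combination hrep - e1
    have hd0 : d = 0 := by
      have h := congrArg L2 hbd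
      rw [map_add, map_mul, map_zero, hb.2.2, hd.2.2, hL2q] at h
      linear_combination h - hbd
    have hb0 : b = 0 := by linear_combination hbd - qL F m * hd0
    have e2 : ph F m f = a + b * (wL F m + ph F m (C lam)) + c * (qL F m + 1)
        + d * ((wL F m + ph F m (C lam)) * (qL F m + 1)) := by
      have h := congrArg L2 hrep
      rw [hL2φ, hf2] at h
      rw [map_add, map_add, map_add, map_mul, map_mul, map_mul, map_mul] at h
      rw [ha.2.2, hb.2.2, hc.2.2, hd.2.2, hL2w, hL2q] at h
      exact h
    rw [hb0, hd0] at e2 hrep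
    have hc0 : c = 0 := by linear_combination hrep - e2
    have hfa : ph F m f = a := by
      rw [hc0] at hrep
      linear_combination hrep
    rw [hfa]
    exact ha.1
  -- conclude
  apply Set.eq_of_subset_of_subset
  · rintro z ⟨f, k, hf1, hf2, hzk⟩
    have hzk' : ph F m (xv F m 1) ^ k * z = ph F m f := hzk
    have hz : z = iX F m ^ k * ph F m f := by
      calc z = (ph F m (xv F m 1) * iX F m) ^ k * z := by rw [hiX, one_pow, one_mul]
        _ = iX F m ^ k * (ph F m (xv F m 1) ^ k * z) := by ring
        _ = iX F m ^ k * ph F m f := by rw [hzk']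
    rw [hz]
    exact mul_mem (pow_mem hiX_mem k) (main f hf1 hf2)
  · intro z hz
    let TSub : Subalgebra F (Localization.Away (xv F m 1)) :=
      { carrier := {z : Localization.Away (xv F m 1) |
          ∃ (f : MvPolynomial (Fin m ⊕ Fin m) F) (k : ℕ), σ1 f = f ∧ σ2 f = f ∧
            algebraMap (MvPolynomial (Fin m ⊕ Fin m) F) (Localization.Away (xv F m 1))
                (xv F m 1) ^ k * z
              = algebraMap (MvPolynomial (Fin m ⊕ Fin m) F) (Localization.Away (xv F m 1)) f}
        mul_mem' := by
          rintro a b ⟨f1, k1, h11, h12, h13⟩ ⟨f2, k2, h21, h22, h23⟩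
          refine ⟨f1 * f2, k1 + k2, by rw [map_mul, h11, h21], by rw [map_mul, h12, h22], ?_⟩
          have h13' : ph F m (xv F m 1) ^ k1 * a = ph F m f1 := h13
          have h23' : ph F m (xv F m 1) ^ k2 * b = ph F m f2 := h23
          show ph F m (xv F m 1) ^ (k1 + k2) * (a * b) = ph F m (f1 * f2)
          rw [map_mul, pow_add]
          linear_combination (ph F m (xv F m 1) ^ k2 * b) * h13' + ph F m f1 * h23'
        one_mem' := ⟨1, 0, map_one σ1, map_one σ2, by rw [pow_zero, one_mul, map_one]⟩
        add_mem' := by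
          rintro a b ⟨f1, k1, h11, h12, h13⟩ ⟨f2, k2, h21, h22, h23⟩
          refine ⟨f1 * xv F m 1 ^ k2 + f2 * xv F m 1 ^ k1, k1 + k2, ?_, ?_, ?_⟩
          · rw [map_add, map_mul, map_mul, map_pow, map_pow, h11, h21, hσ1x]
          · rw [map_add, map_mul, map_mul, map_pow, map_pow, h12, h22, hσ2x]
          · have h13' : ph F m (xv F m 1) ^ k1 * a = ph F m f1 := h13
            have h23' : ph F m (xv F m 1) ^ k2 * b = ph F m f2 := h23
            show ph F m (xv F m 1) ^ (k1 + k2) * (a + b) = ph F m _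
            rw [map_add, map_mul, map_mul, map_pow, map_pow, pow_add]
            linear_combination (ph F m (xv F m 1) ^ k2) * h13'
              + (ph F m (xv F m 1) ^ k1) * h23'
        zero_mem' := ⟨0, 0, map_zero σ1, map_zero σ2, by rw [pow_zero, one_mul, map_zero]⟩
        algebraMap_mem' := by
          intro r
          refine ⟨C r, 0, sigC σ1 r, sigC σ2 r, ?_⟩
          rw [pow_zero, one_mul, IsScalarTower.algebraMap_apply F
            (MvPolynomial (Fin m ⊕ Fin m) F) (Localization.Away (xv F m 1)), algebraMap_eq] }
    have hsub : G ⊆ (TSub : Set (Localization.Away (xv F m 1))) := by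
      rintro g (⟨f, hf, rfl⟩ | hg)
      · rcases hf with (⟨i, hi, rfl⟩ | hN) | ⟨j, hj, rfl⟩
        · exact ⟨xv F m i, 0, hσ1x i, hσ2x i, by rw [pow_zero, one_mul]⟩
        · rcases hN with rfl | rfl
          · exact ⟨Nv F m lam 1, 0, sig1_N1 lam σ1 hσ1x hσ1y (by omega),
              sig2_N1 lam σ2 hσ2x hσ2y1 hσ2y (by omega), by rw [pow_zero, one_mul]⟩
          · exact ⟨Nv F m lam 2, 0, sig1_N2 lam σ1 hσ1x hσ1y hm4,
              sig2_N2 lam σ2 hσ2x hσ2y1 hσ2y hm4, by rw [pow_zero, one_mul]⟩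
        · obtain ⟨hj3, hjm⟩ := hj
          exact ⟨tv F m j, 0, sig1_t σ1 hσ1x hσ1y j (by omega) hjm (by omega),
            sig2_t lam σ2 hσ2x hσ2y1 hσ2y j (by omega) hjm (by omega),
            by rw [pow_zero, one_mul]⟩
      · refine ⟨1, 1, map_one σ1, map_one σ2, ?_⟩
        rw [pow_one, map_one, mul_comm]
        exact hg
    exact Algebra.adjoin_le hsub hz
end
end
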